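/- arXiv:1103.5179 — 4 statements merged into one kernel-verified Lean document; each statement's English description precedes it below -/
import Mathlib

section
/- Let W be a finite Coxeter group with Coxeter arrangement A, B a W-stable arrangement disjoint from A, and C = A ∪ B. For every chamber b of B, the isotropy subgroup W_b = {w ∈ W : wb = b} acts freely and transitively on the fiber φ_B^{-1}(b), i.e., on the set of chambers of C contained in b. -/
/-!
Freeness. If `w ∈ W_b` maps a chamber `c ⊆ b` of `C` to itself, it fixes the barycentre of a
`⟨w⟩`-orbit in the convex set `c`, a point lying on no mirror of `W`. In a finite reflection group
such a point has trivial stabiliser: choose a simple system `Δ` (a minimal set of positive roots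
whose cone contains every positive root); `W` is generated by the simple reflections, a simple
reflection permutes the positive roots other than its own, and hence a word in simple reflections
that keeps every positive root positive can be shortened until it is empty.

Transitivity. Let `F` be the union of the closures of the chambers `u c₁`, `u ∈ W_b`. A point of
`F ∩ b` lying on at most one hyperplane of `C` is interior to `F`: if it lies on a hyperplane, this
is a mirror of `W` (as `b` meets no hyperplane of `B`), its reflection `s` stabilises `b`, and near
the point the chambers on the two sides of the mirror are `u c₁` and `s u c₁`. The points of `b`
on at most one hyperplane form a connected set (any two are joined through a generic point by
segments) meeting the closed set `F`, so it lies in `F`; in particular `c₂ = u c₁` for some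
`u ∈ W_b`.
-/

open Set

variable {E : Type*} [NormedAddCommGroup E] [InnerProductSpace ℝ E] [FiniteDimensional ℝ E]

/-- A linear hyperplane (through the origin). -/
def IsLinearHyperplane (H : Set E) : Prop :=
  ∃ f : E →ₗ[ℝ] ℝ, f ≠ 0 ∧ H = {x | f x = 0}

/-- An affine hyperplane. -/
def IsAffineHyperplane (H : Set E) : Prop :=
  ∃ (f : E →ₗ[ℝ] ℝ) (c : ℝ), f ≠ 0 ∧ H = {x | f x = c}

/-- A hyperplane arrangement: a finite set of affine hyperplanes. -/
def IsArrangement (𝒜 : Set (Set E)) : Prop :=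
  𝒜.Finite ∧ ∀ H ∈ 𝒜, IsAffineHyperplane H

/-- The chambers of an arrangement: the connected components of the complement of the
union of its hyperplanes. -/
def chambers (𝒜 : Set (Set E)) : Set (Set E) :=
  {c | ∃ x ∈ (⋃₀ 𝒜)ᶜ, c = connectedComponentIn (⋃₀ 𝒜)ᶜ x}

/-- An orthogonal transformation is a reflection if its fixed-point set is a hyperplane. -/
def IsReflection (w : E ≃ₗᵢ[ℝ] E) : Prop :=
  IsLinearHyperplane {x | w x = x}

/-- The Coxeter arrangement of `W`: the set of all reflecting hyperplanes of `W`. -/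
def coxeterArrangement (W : Subgroup (E ≃ₗᵢ[ℝ] E)) : Set (Set E) :=
  {H | ∃ w ∈ W, IsReflection w ∧ H = {x | w x = x}}

/-- `W` is a reflection (Coxeter) group: it is generated by its reflections. -/
def IsReflectionGroup (W : Subgroup (E ≃ₗᵢ[ℝ] E)) : Prop :=
  W = Subgroup.closure {w : E ≃ₗᵢ[ℝ] E | w ∈ W ∧ IsReflection w}

/-- `ℬ` is stable under the natural action of `W`. -/
def WStable (W : Subgroup (E ≃ₗᵢ[ℝ] E)) (ℬ : Set (Set E)) : Prop :=
  ∀ w ∈ W, ∀ H ∈ ℬ, (⇑w) '' H ∈ ℬ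

open RealInnerProductSpace

lemma mul_pos_of_mul_pos_of_mul_pos {a b c : ℝ} (ha : 0 < a * c) (hb : 0 < b * c) : 0 < a * b := by
  have := mul_pos ha hb
  nlinarith [mul_self_nonneg c, mul_self_nonneg (a * b)]

lemma mul_pos_of_isPreconnected {X : Type*} [TopologicalSpace X] {C : Set X} {f : X → ℝ}
    (hC : IsPreconnected C) (hf : ContinuousOn f C) (hf0 : ∀ x ∈ C, f x ≠ 0) {x z : X}
    (hx : x ∈ C) (hz : z ∈ C) : 0 < f z * f x := by
  by_contra! h
  obtain ⟨q, hq, hq0⟩ : (0 : ℝ) ∈ f '' C := by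
    rcases mul_nonpos_iff.mp h with ⟨hz0, hx0⟩ | ⟨hz0, hx0⟩
    · exact hC.intermediate_value hx hz hf ⟨hx0, hz0⟩
    · exact hC.intermediate_value hz hx hf ⟨hz0, hx0⟩
  exact hf0 q hq hq0

section Reflections

omit [FiniteDimensional ℝ E]

noncomputable def reflectionOrth (α : E) : E ≃ₗᵢ[ℝ] E := (ℝ ∙ α)ᗮ.reflection

lemma reflectionOrth_apply {α : E} (hα : ‖α‖ = 1) (x : E) :
    reflectionOrth α x = x - (2 * ⟪α, x⟫) • α := by
  rw [reflectionOrth, Submodule.reflection_orthogonal_apply, Submodule.reflection_singleton_apply,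
    hα]
  simp only [one_pow, RCLike.ofReal_one, div_one]
  module

lemma reflectionOrth_mul_self (α : E) : reflectionOrth α * reflectionOrth α = 1 :=
  Submodule.reflection_mul_reflection _

lemma reflectionOrth_inv (α : E) : (reflectionOrth α)⁻¹ = reflectionOrth α :=
  Submodule.reflection_inv

lemma reflectionOrth_reflectionOrth (α x : E) : reflectionOrth α (reflectionOrth α x) = x :=
  Submodule.reflection_reflection _ x

lemma reflectionOrth_eq_self_iff {α x : E} : reflectionOrth α x = x ↔ ⟪α, x⟫ = 0 :=
  (Submodule.reflection_eq_self_iff x).trans Submodule.mem_orthogonal_singleton_iff_inner_right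

lemma reflectionOrth_self (α : E) : reflectionOrth α α = -α :=
  Submodule.reflection_orthogonalComplement_singleton_eq_neg α

lemma reflectionOrth_neg (α : E) : reflectionOrth (-α) = reflectionOrth α := by
  simp only [reflectionOrth, ← Set.neg_singleton, Submodule.span_neg]

lemma mul_reflectionOrth_mul_inv (u : E ≃ₗᵢ[ℝ] E) (α : E) :
    u * reflectionOrth α * u⁻¹ = reflectionOrth (u α) := by
  have hmap : (ℝ ∙ α)ᗮ.map (u.toLinearEquiv : E →ₗ[ℝ] E) = (ℝ ∙ u α)ᗮ := by
    ext x
    rw [Submodule.mem_map_equiv, Submodule.mem_orthogonal_singleton_iff_inner_right,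
      Submodule.mem_orthogonal_singleton_iff_inner_right, ← u.inner_map_map]
    simp
  ext x
  have h := Submodule.reflection_map_apply u (ℝ ∙ α)ᗮ x
  simp only [hmap] at h
  simp [reflectionOrth, h]

lemma isReflection_reflectionOrth {α : E} (hα : α ≠ 0) : IsReflection (reflectionOrth α) :=
  ⟨(innerSL ℝ α).toLinearMap, fun h => hα (by simpa using LinearMap.congr_fun h α),
    Set.ext fun _ => reflectionOrth_eq_self_iff⟩

end Reflections

lemma IsReflection.exists_eq_reflectionOrth {w : E ≃ₗᵢ[ℝ] E} (hw : IsReflection w) :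
    ∃ α : E, ‖α‖ = 1 ∧ w = reflectionOrth α := by
  obtain ⟨f, hf0, hfix⟩ := hw
  set a := (InnerProductSpace.toDual ℝ E).symm (LinearMap.toContinuousLinearMap f)
  have hfa : ∀ x, f x = ⟪a, x⟫ := fun x => by simp [a]
  have ha : a ≠ 0 := fun h => hf0 (LinearMap.ext fun x => by simp [hfa, h])
  set α := ‖a‖⁻¹ • a
  have hα : ‖α‖ = 1 := norm_smul_inv_norm ha
  have hfixα : ∀ x, w x = x ↔ ⟪α, x⟫ = 0 := fun x => by
    have hx : w x = x ↔ f x = 0 := Set.ext_iff.mp hfix x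
    simp [hx, hfa, α, real_inner_smul_left, ha]
  have hαα : ⟪α, α⟫ = 1 := by rw [real_inner_self_eq_norm_sq, hα, one_pow]
  have hwα_mem : w α ∈ ℝ ∙ α := by
    rw [← Submodule.orthogonal_orthogonal (ℝ ∙ α)]
    intro y hy
    have hwy : w y = y :=
      (hfixα y).mpr (Submodule.mem_orthogonal_singleton_iff_inner_right.mp hy)
    rw [← hwy, w.inner_map_map]
    exact Submodule.mem_orthogonal_singleton_iff_inner_left.mp hy
  obtain ⟨t, ht⟩ := Submodule.mem_span_singleton.mp hwα_mem
  have ht_abs : |t| = 1 := by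
    simpa [hα, norm_smul] using congrArg norm ht
  have hwα : w α = -α := by
    rcases (abs_eq zero_le_one).mp ht_abs with rfl | rfl
    · exact absurd ((hfixα α).mp (by rw [← ht, one_smul])) (hαα ▸ one_ne_zero)
    · rw [← ht, neg_one_smul]
  refine ⟨α, hα, LinearIsometryEquiv.ext fun x => ?_⟩
  have hperp : w (x - ⟪α, x⟫ • α) = x - ⟪α, x⟫ • α := by
    rw [hfixα, inner_sub_right, real_inner_smul_right, hαα, mul_one, sub_self]
  calc w x = w (x - ⟪α, x⟫ • α) + ⟪α, x⟫ • w α := by rw [← map_smul, ← map_add, sub_add_cancel]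
    _ = reflectionOrth α x := by rw [hperp, hwα, reflectionOrth_apply hα]; module

omit [FiniteDimensional ℝ E] in
lemma eq_or_eq_neg_of_reflectionOrth_eq {α β : E} (hα : ‖α‖ = 1) (hβ : ‖β‖ = 1)
    (h : reflectionOrth α = reflectionOrth β) : β = α ∨ β = -α := by
  have hβα : (ℝ ∙ α).reflection β = β := by
    rw [← neg_inj, ← Submodule.reflection_orthogonal_apply]
    exact (congrArg (· β) h).trans (reflectionOrth_self β)
  obtain ⟨t, rfl⟩ := Submodule.mem_span_singleton.mp ((Submodule.reflection_eq_self_iff β).mp hβα)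
  have ht : |t| = 1 := by simpa [hα, norm_smul] using hβ
  rcases (abs_eq zero_le_one).mp ht with rfl | rfl
  · simp
  · simp

section Roots

variable {W : Subgroup (E ≃ₗᵢ[ℝ] E)}

def roots (W : Subgroup (E ≃ₗᵢ[ℝ] E)) : Set E := {α | ‖α‖ = 1 ∧ reflectionOrth α ∈ W}

def positiveRoots (W : Subgroup (E ≃ₗᵢ[ℝ] E)) (y : E) : Set E := {α | α ∈ roots W ∧ 0 < ⟪α, y⟫}

omit [FiniteDimensional ℝ E]

lemma ne_zero_of_mem_roots {α : E} (hα : α ∈ roots W) : α ≠ 0 :=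
  norm_ne_zero_iff.mp (hα.1 ▸ one_ne_zero)

lemma neg_mem_roots {α : E} (hα : α ∈ roots W) : -α ∈ roots W :=
  ⟨by rw [norm_neg, hα.1], by rw [reflectionOrth_neg]; exact hα.2⟩

lemma apply_mem_roots {α : E} (hα : α ∈ roots W) {u : E ≃ₗᵢ[ℝ] E} (hu : u ∈ W) :
    u α ∈ roots W :=
  ⟨by rw [u.norm_map, hα.1],
    mul_reflectionOrth_mul_inv u α ▸ mul_mem (mul_mem hu hα.2) (inv_mem hu)⟩

lemma mem_positiveRoots_or_neg_mem {y α : E} (hα : α ∈ roots W) (hαy : ⟪α, y⟫ ≠ 0) :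
    α ∈ positiveRoots W y ∨ -α ∈ positiveRoots W y := by
  rcases hαy.lt_or_gt with h | h
  · exact Or.inr ⟨neg_mem_roots hα, by rw [inner_neg_left]; linarith⟩
  · exact Or.inl ⟨hα, h⟩

lemma positiveRoots_finite (hWfin : (W : Set (E ≃ₗᵢ[ℝ] E)).Finite) (y : E) :
    (positiveRoots W y).Finite := by
  refine Set.Finite.of_finite_image (f := reflectionOrth) (hWfin.subset ?_) fun α hα β hβ hαβ => ?_
  · rintro - ⟨α, hα, rfl⟩
    exact hα.1.2
  · rcases eq_or_eq_neg_of_reflectionOrth_eq hα.1.1 hβ.1.1 hαβ with h | h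
    · exact h.symm
    · have := hβ.2
      rw [h, inner_neg_left] at this
      linarith [hα.2]

end Roots

section CoxeterArrangement

variable {W : Subgroup (E ≃ₗᵢ[ℝ] E)}

lemma mem_coxeterArrangement_iff {H : Set E} :
    H ∈ coxeterArrangement W ↔ ∃ α ∈ roots W, H = {x | ⟪α, x⟫ = 0} := by
  constructor
  · rintro ⟨w, hwW, hw, rfl⟩
    obtain ⟨α, hα, rfl⟩ := hw.exists_eq_reflectionOrth
    exact ⟨α, ⟨hα, hwW⟩, Set.ext fun _ => reflectionOrth_eq_self_iff⟩
  · rintro ⟨α, hα, rfl⟩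
    exact ⟨_, hα.2, isReflection_reflectionOrth (ne_zero_of_mem_roots hα),
      Set.ext fun _ => reflectionOrth_eq_self_iff.symm⟩

lemma inner_ne_zero_of_mem_roots {y : E} (hy : y ∉ ⋃₀ coxeterArrangement W) {α : E}
    (hα : α ∈ roots W) : ⟪α, y⟫ ≠ 0 :=
  fun h => hy ⟨_, mem_coxeterArrangement_iff.mpr ⟨α, hα, rfl⟩, h⟩

lemma IsReflectionGroup.le_closure_roots (hW : IsReflectionGroup W) :
    W ≤ Subgroup.closure (reflectionOrth '' roots W) := by
  refine hW.le.trans (Subgroup.closure_mono fun w ⟨hwW, hw⟩ => ?_)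
  obtain ⟨α, hα, rfl⟩ := hw.exists_eq_reflectionOrth
  exact ⟨α, ⟨hα, hwW⟩, rfl⟩

end CoxeterArrangement

section SimpleSystem

omit [FiniteDimensional ℝ E]

variable {W : Subgroup (E ≃ₗᵢ[ℝ] E)} {y : E} {Δ : Finset E}

def InCone (S : Finset E) (β : E) : Prop :=
  ∃ t : E → ℝ, (∀ γ ∈ S, 0 ≤ t γ) ∧ ∑ γ ∈ S, t γ • γ = β

lemma inCone_of_mem {S : Finset E} {β : E} (hβ : β ∈ S) : InCone S β := by
  classical
  exact ⟨Pi.single β 1, fun γ _ => by by_cases h : γ = β <;> simp [h], by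
    simp [Pi.single_apply, hβ]⟩

structure IsSimpleSystem (W : Subgroup (E ≃ₗᵢ[ℝ] E)) (y : E) (Δ : Finset E) : Prop where
  subset : ↑Δ ⊆ positiveRoots W y
  inCone : ∀ β ∈ positiveRoots W y, InCone Δ β
  card_le : ∀ T : Finset E, ↑T ⊆ positiveRoots W y → (∀ β ∈ positiveRoots W y, InCone T β) →
    Δ.card ≤ T.card

lemma exists_isSimpleSystem (hWfin : (W : Set (E ≃ₗᵢ[ℝ] E)).Finite) (y : E) :
    ∃ Δ, IsSimpleSystem W y Δ := by
  set P := {T : Finset E | ↑T ⊆ positiveRoots W y ∧ ∀ β ∈ positiveRoots W y, InCone T β}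
  have hP : (positiveRoots_finite hWfin y).toFinset ∈ P :=
    ⟨by simp, fun β hβ => inCone_of_mem (by simpa using hβ)⟩
  obtain ⟨Δ, ⟨hsub, hcone⟩, hmin⟩ := (measure Finset.card).wf.has_min P ⟨_, hP⟩
  exact ⟨Δ, hsub, hcone, fun T hT hTcone => not_lt.mp (hmin T ⟨hT, hTcone⟩)⟩

namespace IsSimpleSystem

variable (hΔ : IsSimpleSystem W y Δ)
include hΔ

lemma not_inCone_erase [DecidableEq E] {α : E} (hα : α ∈ Δ) : ¬ InCone (Δ.erase α) α := by
  rintro ⟨c, hc, hcsum⟩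
  refine (Finset.card_erase_lt_of_mem hα).not_ge (hΔ.card_le _
    (fun γ hγ => hΔ.subset (Finset.mem_of_mem_erase hγ)) fun β hβ => ?_)
  obtain ⟨t, ht, htsum⟩ := hΔ.inCone β hβ
  refine ⟨fun γ => t γ + t α * c γ, fun γ hγ =>
    add_nonneg (ht γ (Finset.mem_of_mem_erase hγ)) (mul_nonneg (ht α hα) (hc γ hγ)), ?_⟩
  simp only [add_smul, mul_smul, Finset.sum_add_distrib, ← Finset.smul_sum, hcsum]
  rw [← htsum, ← Finset.sum_erase_add Δ _ hα]

lemma eq_zero_of_sum_erase_eq_smul [DecidableEq E] {α : E} (hα : α ∈ Δ) {s : E → ℝ} {r : ℝ}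
    (hs : ∀ γ ∈ Δ.erase α, 0 ≤ s γ) (hsum : ∑ γ ∈ Δ.erase α, s γ • γ = r • α) :
    ∀ γ ∈ Δ.erase α, s γ = 0 := by
  rcases lt_or_ge 0 r with hr | hr
  · refine absurd ⟨fun γ => r⁻¹ * s γ, fun γ hγ => mul_nonneg (inv_nonneg.mpr hr.le) (hs γ hγ),
      ?_⟩ (hΔ.not_inCone_erase hα)
    simp only [mul_smul, ← Finset.smul_sum, hsum, inv_smul_smul₀ hr.ne']
  have hpos : ∀ γ ∈ Δ.erase α, 0 < ⟪γ, y⟫ := fun γ hγ =>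
    (hΔ.subset (Finset.mem_of_mem_erase hγ)).2
  have hterm : ∀ γ ∈ Δ.erase α, 0 ≤ s γ * ⟪γ, y⟫ := fun γ hγ =>
    mul_nonneg (hs γ hγ) (hpos γ hγ).le
  have hpair : ∑ γ ∈ Δ.erase α, s γ * ⟪γ, y⟫ = r * ⟪α, y⟫ := by
    simpa [sum_inner, real_inner_smul_left] using congrArg (⟪·, y⟫) hsum
  have hzero := (Finset.sum_eq_zero_iff_of_nonneg hterm).mp <| le_antisymm
    (hpair ▸ mul_nonpos_of_nonpos_of_nonneg hr (hΔ.subset hα).2.le) (Finset.sum_nonneg hterm)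
  exact fun γ hγ => (mul_eq_zero.mp (hzero γ hγ)).resolve_right (hpos γ hγ).ne'

lemma reflectionOrth_mem_positiveRoots (hy : ∀ α ∈ roots W, ⟪α, y⟫ ≠ 0) {α β : E}
    (hα : α ∈ Δ) (hβ : β ∈ positiveRoots W y) (hne : β ≠ α) :
    reflectionOrth α β ∈ positiveRoots W y := by
  classical
  have hα1 : ‖α‖ = 1 := (hΔ.subset hα).1.1
  have hsβ : reflectionOrth α β ∈ roots W := apply_mem_roots hβ.1 (hΔ.subset hα).1.2
  by_contra hneg
  obtain ⟨t, ht, htsum⟩ := hΔ.inCone β hβ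
  obtain ⟨d, hd, hdsum⟩ := hΔ.inCone _
    ((mem_positiveRoots_or_neg_mem hsβ (hy _ hsβ)).resolve_left hneg)
  -- the cone coefficients `t + d` of `β - sα β = 2 ⟪α, β⟫ α` must vanish away from `α`
  have hsum : ∑ γ ∈ Δ.erase α, (t γ + d γ) • γ = (2 * ⟪α, β⟫ - (t α + d α)) • α := by
    have h := Finset.sum_erase_add Δ (fun γ => (t γ + d γ) • γ) hα
    simp only [add_smul, Finset.sum_add_distrib, htsum, hdsum, reflectionOrth_apply hα1] at h ⊢
    linear_combination (norm := module) h
  have hzero := hΔ.eq_zero_of_sum_erase_eq_smul hα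
    (fun γ hγ => add_nonneg (ht γ (Finset.mem_of_mem_erase hγ)) (hd γ (Finset.mem_of_mem_erase hγ)))
    hsum
  have hβα : β = t α • α := by
    rw [← htsum, ← Finset.sum_erase_add Δ _ hα, Finset.sum_eq_zero fun γ hγ => ?_, zero_add]
    have := hzero γ hγ
    rw [le_antisymm (by linarith [hd γ (Finset.mem_of_mem_erase hγ)])
      (ht γ (Finset.mem_of_mem_erase hγ)), zero_smul]
  have htα : t α = 1 := by
    simpa [hβ.1.1, hα1, norm_smul, abs_of_nonneg (ht α hα)] using (congrArg norm hβα).symm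
  exact hne (by rw [hβα, htα, one_smul])

lemma exists_inner_pos {β : E} (hβ : β ∈ positiveRoots W y) : ∃ δ ∈ Δ, 0 < ⟪δ, β⟫ := by
  obtain ⟨t, ht, htsum⟩ := hΔ.inCone β hβ
  have h1 : ∑ δ ∈ Δ, t δ * ⟪δ, β⟫ = 1 := by
    have := congrArg (⟪·, β⟫) htsum
    simp only [sum_inner, real_inner_smul_left, real_inner_self_eq_norm_sq, hβ.1.1] at this
    linarith
  by_contra! h
  linarith [Finset.sum_nonpos fun δ hδ => mul_nonpos_of_nonneg_of_nonpos (ht δ hδ) (h δ hδ)]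

lemma reflectionOrth_mem_closure (hWfin : (W : Set (E ≃ₗᵢ[ℝ] E)).Finite)
    (hy : ∀ α ∈ roots W, ⟪α, y⟫ ≠ 0) {β : E} (hβ : β ∈ positiveRoots W y) :
    reflectionOrth β ∈ Subgroup.closure (reflectionOrth '' (Δ : Set E)) := by
  set G := Subgroup.closure (reflectionOrth '' (Δ : Set E))
  have hgen : ∀ δ ∈ Δ, reflectionOrth δ ∈ G := fun δ hδ => Subgroup.subset_closure ⟨δ, hδ, rfl⟩
  set S := {γ | γ ∈ positiveRoots W y ∧ ∃ u ∈ G, u β = γ}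
  -- a positive root of minimal height in the `G`-orbit of `β` is simple
  obtain ⟨-, ⟨hγ, u, hu, rfl⟩, hmin⟩ := S.exists_min_image (⟪·, y⟫)
    ((positiveRoots_finite hWfin y).subset fun _ h => h.1) ⟨β, hβ, 1, one_mem G, rfl⟩
  have huβ : u β ∈ Δ := by
    by_contra hnot
    obtain ⟨δ, hδ, hpos⟩ := hΔ.exists_inner_pos hγ
    have hmem : reflectionOrth δ (u β) ∈ S :=
      ⟨hΔ.reflectionOrth_mem_positiveRoots hy hδ hγ (ne_of_mem_of_not_mem hδ hnot).symm,
        reflectionOrth δ * u, mul_mem (hgen δ hδ) hu, rfl⟩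
    have := hmin _ hmem
    rw [reflectionOrth_apply (hΔ.subset hδ).1.1, inner_sub_left, real_inner_smul_left] at this
    nlinarith [(hΔ.subset hδ).2]
  have hconj : reflectionOrth β = u⁻¹ * reflectionOrth (u β) * u := by
    rw [← mul_reflectionOrth_mul_inv]
    group
  rw [hconj]
  exact mul_mem (mul_mem (inv_mem hu) (hgen _ huβ)) hu

end IsSimpleSystem

end SimpleSystem

lemma IsSimpleSystem.le_closure {W : Subgroup (E ≃ₗᵢ[ℝ] E)} {y : E} {Δ : Finset E}
    (hΔ : IsSimpleSystem W y Δ) (hWfin : (W : Set (E ≃ₗᵢ[ℝ] E)).Finite) (hW : IsReflectionGroup W)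
    (hy : ∀ α ∈ roots W, ⟪α, y⟫ ≠ 0) : W ≤ Subgroup.closure (reflectionOrth '' (Δ : Set E)) := by
  refine hW.le_closure_roots.trans ((Subgroup.closure_le _).mpr ?_)
  rintro - ⟨α, hα, rfl⟩
  rcases mem_positiveRoots_or_neg_mem hα (hy α hα) with h | h
  · exact hΔ.reflectionOrth_mem_closure hWfin hy h
  · simpa [reflectionOrth_neg] using hΔ.reflectionOrth_mem_closure hWfin hy h

section Words

omit [FiniteDimensional ℝ E]

variable {W : Subgroup (E ≃ₗᵢ[ℝ] E)} {y : E} {Δ : Finset E}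

lemma exists_list_of_mem_closure {S : Set E} {u : E ≃ₗᵢ[ℝ] E}
    (hu : u ∈ Subgroup.closure (reflectionOrth '' S)) :
    ∃ L : List E, (∀ δ ∈ L, δ ∈ S) ∧ (L.map reflectionOrth).prod = u := by
  induction hu using Subgroup.closure_induction with
  | mem _ hx =>
    obtain ⟨δ, hδ, rfl⟩ := hx
    exact ⟨[δ], by simpa using hδ, by simp⟩
  | one => exact ⟨[], by simp, rfl⟩
  | mul _ _ _ _ ih₁ ih₂ =>
    obtain ⟨L₁, h₁, rfl⟩ := ih₁
    obtain ⟨L₂, h₂, rfl⟩ := ih₂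
    exact ⟨L₁ ++ L₂, fun δ hδ => (List.mem_append.mp hδ).elim (h₁ δ) (h₂ δ), by simp⟩
  | inv _ _ ih =>
    obtain ⟨L, hL, rfl⟩ := ih
    refine ⟨L.reverse, fun δ hδ => hL δ (List.mem_reverse.mp hδ), ?_⟩
    simp [List.prod_inv_reverse, Function.comp_def, reflectionOrth_inv]

namespace IsSimpleSystem

variable (hΔ : IsSimpleSystem W y Δ) (hy : ∀ α ∈ roots W, ⟪α, y⟫ ≠ 0)
include hΔ hy

lemma exists_eq_append_cons {M : List E} (hM : ∀ δ ∈ M, δ ∈ Δ) {β : E}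
    (hβ : β ∈ positiveRoots W y) (hMβ : (M.map reflectionOrth).prod β ∉ positiveRoots W y) :
    ∃ M₁ γ M₂, M = M₁ ++ γ :: M₂ ∧ (M₂.map reflectionOrth).prod β = γ := by
  induction M with
  | nil => exact absurd hβ (by simpa using hMβ)
  | cons δ M ih =>
    by_cases hM' : (M.map reflectionOrth).prod β ∈ positiveRoots W y
    · refine ⟨[], δ, M, rfl, ?_⟩
      by_contra hne
      exact hMβ (by simpa using hΔ.reflectionOrth_mem_positiveRoots hy (hM δ (by simp)) hM' hne)
    · obtain ⟨M₁, γ, M₂, rfl, hγ⟩ := ih (fun δ' h => hM δ' (by simp [h])) hM'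
      exact ⟨δ :: M₁, γ, M₂, rfl, hγ⟩

lemma exists_shorter_list {L : List E} (hL : ∀ δ ∈ L, δ ∈ Δ) (hne : L ≠ [])
    (hpos : ∀ α ∈ positiveRoots W y, (L.map reflectionOrth).prod α ∈ positiveRoots W y) :
    ∃ L' : List E, (∀ δ ∈ L', δ ∈ Δ) ∧ L'.length < L.length ∧
      (L'.map reflectionOrth).prod = (L.map reflectionOrth).prod := by
  obtain ⟨M, δ, rfl⟩ := (List.eq_nil_or_concat L).resolve_left hne
  simp only [List.concat_eq_append, List.mem_append, List.mem_singleton] at hL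
  have hδ : δ ∈ Δ := hL δ (Or.inr rfl)
  have hMδ : (M.map reflectionOrth).prod δ ∉ positiveRoots W y := fun h => by
    have := (hpos δ (hΔ.subset hδ)).2
    simp only [List.concat_eq_append, List.map_append, List.map_cons, List.map_nil,
      List.prod_append, List.prod_cons, List.prod_nil, mul_one, LinearIsometryEquiv.coe_mul,
      Function.comp_apply, reflectionOrth_self, map_neg, inner_neg_left] at this
    linarith [h.2]
  obtain ⟨M₁, γ, M₂, rfl, hγ⟩ :=
    hΔ.exists_eq_append_cons hy (fun δ' h => hL δ' (Or.inl h)) (hΔ.subset hδ) hMδ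
  refine ⟨M₁ ++ M₂, fun δ' h => hL δ' (Or.inl ?_), by simp, ?_⟩
  · simp only [List.mem_append, List.mem_cons] at h ⊢
    tauto
  -- deleting `γ` and `δ` keeps the product, as `sγ` is `sδ` conjugated by the product over `M₂`
  have hconj : reflectionOrth γ = (M₂.map reflectionOrth).prod * reflectionOrth δ *
      (M₂.map reflectionOrth).prod⁻¹ := by
    rw [← hγ, mul_reflectionOrth_mul_inv]
  simp only [List.concat_eq_append, List.map_append, List.map_cons, List.map_nil,
    List.prod_append, List.prod_cons, List.prod_nil, hconj, mul_assoc, inv_mul_cancel_left,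
    reflectionOrth_mul_self, mul_one]

lemma prod_eq_one {L : List E} (hL : ∀ δ ∈ L, δ ∈ Δ)
    (hpos : ∀ α ∈ positiveRoots W y, (L.map reflectionOrth).prod α ∈ positiveRoots W y) :
    (L.map reflectionOrth).prod = 1 := by
  induction h : L.length using Nat.strong_induction_on generalizing L with
  | _ n ih =>
    rcases eq_or_ne L [] with rfl | hne
    · rfl
    obtain ⟨L', hL', hlen, hprod⟩ := hΔ.exists_shorter_list hy hL hne hpos
    rw [← hprod]
    exact ih _ (h ▸ hlen) hL' (hprod ▸ hpos) rfl

end IsSimpleSystem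

end Words

theorem eq_one_of_apply_eq_self {W : Subgroup (E ≃ₗᵢ[ℝ] E)}
    (hWfin : (W : Set (E ≃ₗᵢ[ℝ] E)).Finite) (hW : IsReflectionGroup W) {y : E}
    (hy : y ∉ ⋃₀ coxeterArrangement W) {u : E ≃ₗᵢ[ℝ] E} (hu : u ∈ W) (huy : u y = y) : u = 1 := by
  have hy' : ∀ α ∈ roots W, ⟪α, y⟫ ≠ 0 := fun α hα => inner_ne_zero_of_mem_roots hy hα
  obtain ⟨Δ, hΔ⟩ := exists_isSimpleSystem hWfin y
  obtain ⟨L, hL, rfl⟩ := exists_list_of_mem_closure (hΔ.le_closure hWfin hW hy' hu)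
  refine hΔ.prod_eq_one hy' hL fun α hα => ⟨apply_mem_roots hα.1 hu, ?_⟩
  rw [← huy, LinearIsometryEquiv.inner_map_map]
  exact hα.2

section Chambers

open Classical in
noncomputable def side (H : Set E) : E →ᵃ[ℝ] ℝ :=
  if h : IsAffineHyperplane H then
    h.choose.toAffineMap - AffineMap.const ℝ E h.choose_spec.choose
  else 0

def chamberOf (𝒜 : Set (Set E)) (x : E) : Set E := {z | ∀ H ∈ 𝒜, 0 < side H z * side H x}

variable {𝒜 : Set (Set E)}

section

omit [FiniteDimensional ℝ E]

lemma side_eq_zero_iff {H : Set E} (hH : IsAffineHyperplane H) {x : E} :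
    side H x = 0 ↔ x ∈ H := by
  rw [side, dif_pos hH, Set.ext_iff.mp hH.choose_spec.choose_spec.2 x]
  simp [sub_eq_zero]

lemma side_ne_zero {H : Set E} (hH : IsAffineHyperplane H) : side H ≠ 0 := by
  intro h
  have hall : ∀ x, x ∈ H := fun x => (side_eq_zero_iff hH).mp (by simp [h])
  obtain ⟨f, c, hf, rfl⟩ := hH
  obtain ⟨v, hv⟩ : ∃ v, f v ≠ 0 := by
    by_contra! h'
    exact hf (LinearMap.ext h')
  have h₁ : f ((c / f v) • v) = c := hall _
  have h₂ : f ((c / f v + 1) • v) = c := hall _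
  simp only [map_smul, smul_eq_mul] at h₁ h₂
  exact hv (by linarith)

lemma side_ne_zero_of_not_mem (h𝒜 : IsArrangement 𝒜) {x : E} (hx : x ∈ (⋃₀ 𝒜)ᶜ) {H : Set E}
    (hH : H ∈ 𝒜) : side H x ≠ 0 :=
  fun h => hx ⟨H, hH, (side_eq_zero_iff (h𝒜.2 H hH)).mp h⟩

lemma mem_chamberOf_self (h𝒜 : IsArrangement 𝒜) {x : E} (hx : x ∈ (⋃₀ 𝒜)ᶜ) :
    x ∈ chamberOf 𝒜 x :=
  fun _ hH => mul_self_pos.mpr (side_ne_zero_of_not_mem h𝒜 hx hH)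

lemma chamberOf_subset_compl (h𝒜 : IsArrangement 𝒜) (x : E) : chamberOf 𝒜 x ⊆ (⋃₀ 𝒜)ᶜ :=
  fun _ hz ⟨H, hH, hzH⟩ => by
    simpa [(side_eq_zero_iff (h𝒜.2 H hH)).mpr hzH] using hz H hH

lemma chamberOf_eq_of_mem {x z : E} (hz : z ∈ chamberOf 𝒜 x) : chamberOf 𝒜 z = chamberOf 𝒜 x := by
  ext q
  refine forall₂_congr fun H hH => ⟨fun h => ?_, fun h => ?_⟩
  · exact mul_pos_of_mul_pos_of_mul_pos h (mul_comm (side H z) _ ▸ hz H hH)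
  · exact mul_pos_of_mul_pos_of_mul_pos h (mul_comm (side H z) _ ▸ hz H hH)

lemma convex_chamberOf (𝒜 : Set (Set E)) (x : E) : Convex ℝ (chamberOf 𝒜 x) :=
  fun _ h₁ _ h₂ a b ha hb hab H hH => by
    rw [Convex.combo_affine_apply hab, smul_eq_mul, smul_eq_mul, add_mul, mul_assoc, mul_assoc]
    exact convex_Ioi (0 : ℝ) (h₁ H hH) (h₂ H hH) ha hb hab

lemma image_mem_chambers {u : E ≃ₗᵢ[ℝ] E} (hu : ⇑u '' ⋃₀ 𝒜 = ⋃₀ 𝒜) {c : Set E}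
    (hc : c ∈ chambers 𝒜) : ⇑u '' c ∈ chambers 𝒜 := by
  obtain ⟨x, hx, rfl⟩ := hc
  have hcompl : ⇑u '' (⋃₀ 𝒜)ᶜ = (⋃₀ 𝒜)ᶜ := by rw [image_compl_eq u.bijective, hu]
  refine ⟨u x, hcompl ▸ mem_image_of_mem u hx, ?_⟩
  simpa [hcompl] using u.toHomeomorph.image_connectedComponentIn hx

end

omit [InnerProductSpace ℝ E] [FiniteDimensional ℝ E] in
lemma nonempty_of_mem_chambers {c : Set E} (hc : c ∈ chambers 𝒜) : c.Nonempty := by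
  obtain ⟨x, hx, rfl⟩ := hc
  exact ⟨x, mem_connectedComponentIn hx⟩

omit [InnerProductSpace ℝ E] [FiniteDimensional ℝ E] in
lemma subset_compl_of_mem_chambers {c : Set E} (hc : c ∈ chambers 𝒜) : c ⊆ (⋃₀ 𝒜)ᶜ := by
  obtain ⟨x, -, rfl⟩ := hc
  exact connectedComponentIn_subset _ _

lemma continuous_side (H : Set E) : Continuous (side H) :=
  (side H).continuous_of_finiteDimensional

lemma isOpen_chamberOf (h𝒜 : IsArrangement 𝒜) (x : E) : IsOpen (chamberOf 𝒜 x) := by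
  have : chamberOf 𝒜 x = ⋂ H ∈ 𝒜, {z | 0 < side H z * side H x} := by ext; simp [chamberOf]
  rw [this]
  exact h𝒜.1.isOpen_biInter fun H _ =>
    isOpen_lt continuous_const ((continuous_side H).mul continuous_const)

lemma connectedComponentIn_eq_chamberOf (h𝒜 : IsArrangement 𝒜) {x : E} (hx : x ∈ (⋃₀ 𝒜)ᶜ) :
    connectedComponentIn (⋃₀ 𝒜)ᶜ x = chamberOf 𝒜 x := by
  refine Subset.antisymm (fun z hz H hH => ?_) ((convex_chamberOf 𝒜 x).isPreconnected
    |>.subset_connectedComponentIn (mem_chamberOf_self h𝒜 hx) (chamberOf_subset_compl h𝒜 x))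
  exact mul_pos_of_isPreconnected isPreconnected_connectedComponentIn
    (continuous_side H).continuousOn
    (fun q hq => side_ne_zero_of_not_mem h𝒜 (connectedComponentIn_subset _ _ hq) hH)
    (mem_connectedComponentIn hx) hz

lemma mem_chambers_iff (h𝒜 : IsArrangement 𝒜) {c : Set E} :
    c ∈ chambers 𝒜 ↔ ∃ x ∈ (⋃₀ 𝒜)ᶜ, c = chamberOf 𝒜 x := by
  refine exists_congr fun x => and_congr_right fun hx => ?_
  rw [connectedComponentIn_eq_chamberOf h𝒜 hx]

lemma eq_chamberOf_of_mem (h𝒜 : IsArrangement 𝒜) {c : Set E} (hc : c ∈ chambers 𝒜) {p : E}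
    (hp : p ∈ c) : c = chamberOf 𝒜 p := by
  obtain ⟨x, -, rfl⟩ := (mem_chambers_iff h𝒜).mp hc
  exact (chamberOf_eq_of_mem hp).symm

lemma isOpen_of_mem_chambers (h𝒜 : IsArrangement 𝒜) {c : Set E} (hc : c ∈ chambers 𝒜) :
    IsOpen c := by
  obtain ⟨x, -, rfl⟩ := (mem_chambers_iff h𝒜).mp hc
  exact isOpen_chamberOf h𝒜 x

lemma convex_of_mem_chambers (h𝒜 : IsArrangement 𝒜) {c : Set E} (hc : c ∈ chambers 𝒜) :
    Convex ℝ c := by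
  obtain ⟨x, -, rfl⟩ := (mem_chambers_iff h𝒜).mp hc
  exact convex_chamberOf 𝒜 x

lemma mem_of_mem_closure (h𝒜 : IsArrangement 𝒜) {c : Set E} (hc : c ∈ chambers 𝒜) {z : E}
    (hz : z ∈ (⋃₀ 𝒜)ᶜ) (hzc : z ∈ closure c) : z ∈ c := by
  obtain ⟨p, hp, hpc⟩ := mem_closure_iff.mp hzc _ (isOpen_chamberOf h𝒜 z)
    (mem_chamberOf_self h𝒜 hz)
  rw [eq_chamberOf_of_mem h𝒜 hc hpc, chamberOf_eq_of_mem hp]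
  exact mem_chamberOf_self h𝒜 hz

end Chambers

section Stability

variable {W : Subgroup (E ≃ₗᵢ[ℝ] E)} {𝒜 ℬ : Set (Set E)}

omit [FiniteDimensional ℝ E] in
lemma IsArrangement.union (h𝒜 : IsArrangement 𝒜) (hℬ : IsArrangement ℬ) :
    IsArrangement (𝒜 ∪ ℬ) :=
  ⟨h𝒜.1.union hℬ.1, fun H hH => hH.elim (h𝒜.2 H) (hℬ.2 H)⟩

omit [FiniteDimensional ℝ E] in
lemma isArrangement_coxeterArrangement (hWfin : (W : Set (E ≃ₗᵢ[ℝ] E)).Finite) :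
    IsArrangement (coxeterArrangement W) := by
  refine ⟨(hWfin.image fun w => {x | w x = x}).subset ?_, ?_⟩
  · rintro - ⟨w, hw, -, rfl⟩
    exact mem_image_of_mem _ hw
  · rintro - ⟨w, -, ⟨f, hf, heq⟩, rfl⟩
    exact ⟨f, 0, hf, heq⟩

omit [FiniteDimensional ℝ E] in
lemma WStable.union (h𝒜 : WStable W 𝒜) (hℬ : WStable W ℬ) : WStable W (𝒜 ∪ ℬ) :=
  fun w hw H hH => hH.imp (h𝒜 w hw H) (hℬ w hw H)

omit [FiniteDimensional ℝ E] in
lemma WStable.image_sUnion (h : WStable W 𝒜) {u : E ≃ₗᵢ[ℝ] E} (hu : u ∈ W) :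
    ⇑u '' ⋃₀ 𝒜 = ⋃₀ 𝒜 := by
  refine Subset.antisymm ?_ fun x ⟨H, hH, hxH⟩ => ?_
  · rintro - ⟨x, ⟨H, hH, hxH⟩, rfl⟩
    exact ⟨_, h u hu H hH, mem_image_of_mem u hxH⟩
  · exact ⟨u⁻¹ x, ⟨_, h u⁻¹ (inv_mem hu) H hH, mem_image_of_mem _ hxH⟩, by simp⟩

lemma wStable_coxeterArrangement : WStable W (coxeterArrangement W) := by
  intro u hu H hH
  obtain ⟨α, hα, rfl⟩ := mem_coxeterArrangement_iff.mp hH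
  refine mem_coxeterArrangement_iff.mpr ⟨u α, apply_mem_roots hα hu, Set.ext fun x => ?_⟩
  constructor
  · rintro ⟨z, hz, rfl⟩
    simpa [u.inner_map_map] using hz
  · intro hx
    exact ⟨u.symm x, by rwa [mem_ofPred_eq, ← u.inner_map_eq_flip], by simp⟩

end Stability

section Freeness

omit [FiniteDimensional ℝ E] in
lemma exists_fixed_point_of_image_eq {w : E ≃ₗᵢ[ℝ] E} (hw : IsOfFinOrder w) {c : Set E}
    (hc : Convex ℝ c) (hne : c.Nonempty) (hwc : ⇑w '' c = c) : ∃ y ∈ c, w y = y := by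
  obtain ⟨x, hx⟩ := hne
  set n := orderOf w
  have hpow : ∀ k : ℕ, (w ^ k) x ∈ c := by
    intro k
    induction k with
    | zero => simpa using hx
    | succ k ih =>
      rw [← hwc, pow_succ']
      exact mem_image_of_mem w ih
  -- the barycentre of the `⟨w⟩`-orbit of `x`
  refine ⟨∑ k ∈ Finset.range n, (n : ℝ)⁻¹ • (w ^ k) x,
    hc.sum_mem (fun _ _ => by positivity) (by simp [n, hw.orderOf_pos.ne']) fun k _ => hpow k, ?_⟩
  have hshift : ∀ k, w ((w ^ k) x) = (w ^ (k + 1)) x := fun k => by rw [pow_succ']; rfl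
  have hperiod := Finset.sum_range_succ' (fun k => (w ^ k) x) n
  rw [Finset.sum_range_succ, pow_orderOf_eq_one, pow_zero] at hperiod
  simp only [map_sum, map_smul, hshift, ← Finset.smul_sum]
  rw [add_right_cancel hperiod]

theorem eq_one_of_image_chamber_eq {W : Subgroup (E ≃ₗᵢ[ℝ] E)}
    (hWfin : (W : Set (E ≃ₗᵢ[ℝ] E)).Finite) (hW : IsReflectionGroup W) {𝒞 : Set (Set E)}
    (h𝒞 : IsArrangement 𝒞) (hA𝒞 : coxeterArrangement W ⊆ 𝒞) {w : E ≃ₗᵢ[ℝ] E} (hw : w ∈ W)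
    {c : Set E} (hc : c ∈ chambers 𝒞) (hwc : ⇑w '' c = c) : w = 1 := by
  have : Finite W := hWfin.to_subtype
  obtain ⟨x, hx, rfl⟩ := (mem_chambers_iff h𝒞).mp hc
  obtain ⟨y, hy, hwy⟩ := exists_fixed_point_of_image_eq
    (W.subtype.isOfFinOrder (isOfFinOrder_of_finite (⟨w, hw⟩ : W))) (convex_chamberOf 𝒞 x)
    ⟨x, mem_chamberOf_self h𝒞 hx⟩ hwc
  exact eq_one_of_apply_eq_self hWfin hW
    (fun hmem => chamberOf_subset_compl h𝒞 x hy (sUnion_mono hA𝒞 hmem)) hw hwy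

end Freeness

section CodimTwo

open Filter Topology

omit [FiniteDimensional ℝ E] in
lemma AffineMap.dense_setOf_apply_ne_zero {φ : E →ᵃ[ℝ] ℝ} (hφ : φ ≠ 0) :
    Dense {x | φ x ≠ 0} := by
  have hint : interior {x | φ x = 0} = ∅ := by
    by_contra h
    obtain ⟨v, hv⟩ := nonempty_iff_ne_empty.mpr h
    have hv0 : φ v = 0 := interior_subset (s := {x | φ x = 0}) hv
    have hlin : ∀ x, φ.linear x = 0 := by
      intro x
      have hev : ∀ᶠ t in 𝓝 (0 : ℝ), φ (t • x +ᵥ v) = 0 :=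
        ((continuous_id.smul continuous_const).add continuous_const).tendsto' 0 v (by simp)
          |>.eventually (mem_interior_iff_mem_nhds.mp hv)
      obtain ⟨t, ht, ht0⟩ :=
        (hev.filter_mono nhdsWithin_le_nhds |>.and (self_mem_nhdsWithin (s := {0}ᶜ))).exists
      rw [AffineMap.map_vadd, hv0, map_smul, vadd_eq_add, add_zero, smul_eq_mul] at ht
      exact (mul_eq_zero.mp ht).resolve_left ht0
    exact hφ (AffineMap.ext fun x => by rw [← vsub_vadd x v, AffineMap.map_vadd, hlin, hv0]; simp)
  simpa [compl_ofPred] using interior_eq_empty_iff_dense_compl.mp hint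

lemma exists_mem_forall_apply_ne_zero {U : Set E} (hU : IsOpen U) (hne : U.Nonempty)
    {Φ : Set (E →ᵃ[ℝ] ℝ)} (hΦ : Φ.Finite) (h0 : ∀ φ ∈ Φ, φ ≠ 0) : ∃ z ∈ U, ∀ φ ∈ Φ, φ z ≠ 0 := by
  have hdense : Dense (⋂ φ ∈ Φ, {x | φ x ≠ 0}) :=
    dense_biInter_of_isOpen (fun φ _ => isOpen_ne_fun φ.continuous_of_finiteDimensional
      continuous_const) hΦ.countable fun φ hφ => AffineMap.dense_setOf_apply_ne_zero (h0 φ hφ)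
  obtain ⟨z, hzU, hz⟩ := hdense.inter_open_nonempty U hU hne
  exact ⟨z, hzU, mem_iInter₂.mp hz⟩

/-- The zero set of `pencil p H K` is the hyperplane through `p` of the pencil spanned by `H` and
`K`; it contains every line from `p` that meets `H ∩ K`. -/
noncomputable def pencil (p : E) (H K : Set E) : E →ᵃ[ℝ] ℝ := side K p • side H - side H p • side K

variable {H K : Set E}

omit [FiniteDimensional ℝ E] in
lemma pencil_ne_zero (hH : IsAffineHyperplane H) (hK : IsAffineHyperplane K) (hHK : H ≠ K)
    {p : E} (hp : ¬(p ∈ H ∧ p ∈ K)) : pencil p H K ≠ 0 := by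
  intro h
  have h' : ∀ z, side K p * side H z = side H p * side K z := fun z => by
    simpa [pencil, sub_eq_zero] using congrArg (· z) h
  by_cases ha : side K p = 0
  · have hb : side H p ≠ 0 := fun hb =>
      hp ⟨(side_eq_zero_iff hH).mp hb, (side_eq_zero_iff hK).mp ha⟩
    exact side_ne_zero hK (AffineMap.ext fun z => by simpa [ha, hb] using h' z)
  by_cases hb : side H p = 0
  · exact side_ne_zero hH (AffineMap.ext fun z => by simpa [ha, hb] using h' z)
  refine hHK (Set.ext fun z => ?_)
  rw [← side_eq_zero_iff hH, ← side_eq_zero_iff hK]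
  constructor <;> intro hz
  · simpa [hz, hb] using (h' z).symm
  · simpa [hz, ha] using h' z

omit [FiniteDimensional ℝ E] in
lemma pencil_eq_zero_of_lineMap_mem (hH : IsAffineHyperplane H) (hK : IsAffineHyperplane K)
    {p z : E} {t : ℝ} (ht : t ≠ 0)
    (hmem : AffineMap.lineMap p z t ∈ H ∧ AffineMap.lineMap p z t ∈ K) :
    pencil p H K z = 0 := by
  have h₁ := (side_eq_zero_iff hH).mpr hmem.1
  have h₂ := (side_eq_zero_iff hK).mpr hmem.2
  rw [AffineMap.apply_lineMap, AffineMap.lineMap_apply_ring'] at h₁ h₂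
  have : t * pencil p H K z = 0 := by
    simp only [pencil, AffineMap.coe_sub, AffineMap.coe_smul, Pi.sub_apply, Pi.smul_apply,
      smul_eq_mul]
    linear_combination side K p * h₁ - side H p * h₂
  exact (mul_eq_zero.mp this).resolve_left ht

def codimTwoLocus (𝒜 : Set (Set E)) : Set E := {x | ∃ H ∈ 𝒜, ∃ K ∈ 𝒜, H ≠ K ∧ x ∈ H ∧ x ∈ K}

variable {𝒜 : Set (Set E)} {U : Set E}

omit [FiniteDimensional ℝ E] in
lemma joinedIn_diff_codimTwoLocus (h𝒜 : IsArrangement 𝒜) (hU : Convex ℝ U) {x z : E}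
    (hx : x ∈ U \ codimTwoLocus 𝒜) (hz : z ∈ U)
    (hpencil : ∀ H ∈ 𝒜, ∀ K ∈ 𝒜, H ≠ K → pencil x H K z ≠ 0) :
    JoinedIn (U \ codimTwoLocus 𝒜) x z := by
  refine JoinedIn.of_segment_subset ?_
  rw [segment_eq_image_lineMap]
  rintro - ⟨t, ht, rfl⟩
  refine ⟨hU.lineMap_mem hx.1 hz ht, fun ⟨H, hH, K, hK, hHK, hmem⟩ => ?_⟩
  rcases eq_or_ne t 0 with rfl | ht0
  · exact hx.2 ⟨H, hH, K, hK, hHK, by simpa using hmem⟩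
  · exact hpencil H hH K hK hHK (pencil_eq_zero_of_lineMap_mem (h𝒜.2 H hH) (h𝒜.2 K hK) ht0 hmem)

theorem isPreconnected_diff_codimTwoLocus (h𝒜 : IsArrangement 𝒜) (hUo : IsOpen U)
    (hU : Convex ℝ U) : IsPreconnected (U \ codimTwoLocus 𝒜) := by
  rcases (U \ codimTwoLocus 𝒜).eq_empty_or_nonempty with h | hne
  · rw [h]
    exact isPreconnected_empty
  refine (isPathConnected_iff.mpr ⟨hne, fun x hx y hy => ?_⟩).isConnected.isPreconnected
  set P := {q ∈ ({x, y} : Set E) ×ˢ 𝒜 ×ˢ 𝒜 | q.2.1 ≠ q.2.2}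
  have hP : P.Finite := ((toFinite _).prod (h𝒜.1.prod h𝒜.1)).subset (sep_subset _ _)
  obtain ⟨z, hzU, hz⟩ := exists_mem_forall_apply_ne_zero hUo ⟨x, hx.1⟩
    (hP.image fun q => pencil q.1 q.2.1 q.2.2) <| by
      rintro - ⟨⟨p, H, K⟩, ⟨⟨hp, hH, hK⟩, hHK⟩, rfl⟩
      refine pencil_ne_zero (h𝒜.2 H hH) (h𝒜.2 K hK) hHK fun hpHK => ?_
      rcases hp with rfl | rfl
      exacts [hx.2 ⟨H, hH, K, hK, hHK, hpHK⟩, hy.2 ⟨H, hH, K, hK, hHK, hpHK⟩]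
  have hjoin : ∀ p ∈ ({x, y} : Set E), JoinedIn (U \ codimTwoLocus 𝒜) p z := fun p hp =>
    joinedIn_diff_codimTwoLocus h𝒜 hU (by rcases hp with rfl | rfl <;> assumption) hzU
      fun H hH K hK hHK => hz _ ⟨⟨p, H, K⟩, ⟨⟨hp, hH, hK⟩, hHK⟩, rfl⟩
  exact (hjoin x (by simp)).trans (hjoin y (by simp)).symm

end CodimTwo

section Walls

open Filter Topology

omit [FiniteDimensional ℝ E] in
lemma side_reflectionOrth {α : E} (hα : ‖α‖ = 1) {H : Set E} (hH : IsAffineHyperplane H)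
    (hHα : H = {x | ⟪α, x⟫ = 0}) (x : E) : side H (reflectionOrth α x) = -side H x := by
  -- the midpoint of `x` and its mirror image lies on `H`
  have hmid : side H ((1 / 2 : ℝ) • x + (1 / 2 : ℝ) • reflectionOrth α x) = 0 := by
    rw [side_eq_zero_iff hH, hHα, mem_ofPred_eq, reflectionOrth_apply hα]
    simp only [inner_add_right, inner_sub_right, real_inner_smul_right,
      real_inner_self_eq_norm_sq, hα]
    ring
  rw [Convex.combo_affine_apply (by norm_num), smul_eq_mul, smul_eq_mul] at hmid
  linarith

lemma eventually_mem_closure_or_mem_image {𝒜 : Set (Set E)} (h𝒜 : IsArrangement 𝒜)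
    {H : Set E} (hH : H ∈ 𝒜) {z : E} (hz : ∀ K ∈ 𝒜, z ∈ K → K = H) {s : E ≃ₗᵢ[ℝ] E}
    (hsz : s z = z) (hss : ∀ x, s (s x) = x) (hsH : ∀ x, side H (s x) = -side H x)
    {c : Set E} (hc : c ∈ chambers 𝒜) (hzc : z ∈ closure c) :
    ∀ᶠ q in 𝓝 z, q ∈ closure c ∨ q ∈ ⇑s '' c := by
  have hfar : ∀ᶠ q in 𝓝 z, ∀ K ∈ 𝒜, z ∉ K → 0 < side K q * side K z := by
    refine (eventually_all_finite h𝒜.1).mpr fun K hK => ?_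
    by_cases hzK : z ∈ K
    · exact .of_forall fun _ h => absurd hzK h
    have hzK' : 0 < side K z * side K z :=
      mul_self_pos.mpr fun h => hzK ((side_eq_zero_iff (h𝒜.2 K hK)).mp h)
    exact ((continuous_side K).mul continuous_const).continuousAt.eventually (lt_mem_nhds hzK')
      |>.mono fun _ hq _ => hq
  obtain ⟨r, hr, hball⟩ := Metric.eventually_nhds_iff_ball.mp hfar
  obtain ⟨p, hpc, hpz⟩ := Metric.mem_closure_iff.mp hzc r hr
  have hp : p ∈ Metric.ball z r := by rwa [Metric.mem_ball, dist_comm]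
  have hpH : side H p ≠ 0 := side_ne_zero_of_not_mem h𝒜 (subset_compl_of_mem_chambers hc hpc) hH
  have hsame : ∀ q ∈ Metric.ball z r, 0 < side H q * side H p → q ∈ c := by
    intro q hq hqp
    rw [eq_chamberOf_of_mem h𝒜 hc hpc]
    intro K hK
    by_cases hKH : K = H
    · exact hKH ▸ hqp
    have hzK : z ∉ K := fun h => hKH (hz K hK h)
    exact mul_pos_of_mul_pos_of_mul_pos (hball q hq K hK hzK) (hball p hp K hK hzK)
  refine Metric.eventually_nhds_iff_ball.mpr ⟨r, hr, fun q hq => ?_⟩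
  rcases lt_trichotomy (side H q * side H p) 0 with hneg | hzero | hpos
  · refine Or.inr ⟨s q, hsame (s q) ?_ (by rw [hsH]; linarith), hss q⟩
    rwa [Metric.mem_ball, ← hsz, s.dist_map]
  · -- `q` lies on `H`, at the end of a segment whose other points lie in `c`
    have hqH : side H q = 0 := (mul_eq_zero.mp hzero).resolve_right hpH
    refine Or.inl (closure_mono ?_ (segment_subset_closure_openSegment (left_mem_segment ℝ q p)))
    intro w hw
    obtain ⟨t, ht, rfl⟩ := (openSegment_eq_image_lineMap ℝ q p ▸ hw :)
    refine hsame _ ((convex_ball z r).openSegment_subset hq hp hw) ?_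
    rw [AffineMap.apply_lineMap, AffineMap.lineMap_apply_ring', hqH]
    nlinarith [mul_self_pos.mpr hpH, ht.1]
  · exact Or.inl (subset_closure (hsame q hq hpos))

end Walls

section Fiber

open Topology

def isotropy (W : Subgroup (E ≃ₗᵢ[ℝ] E)) (b : Set E) : Set (E ≃ₗᵢ[ℝ] E) := {u | u ∈ W ∧ ⇑u '' b = b}

variable {W : Subgroup (E ≃ₗᵢ[ℝ] E)} {ℬ : Set (Set E)} {b : Set E}

lemma exists_mem_isotropy_eventually_mem (hWfin : (W : Set (E ≃ₗᵢ[ℝ] E)).Finite)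
    (hB : IsArrangement ℬ) (hBW : WStable W ℬ) (hb : b ∈ chambers ℬ) {c : Set E}
    (hc : c ∈ chambers (coxeterArrangement W ∪ ℬ)) {z : E}
    (hz : z ∈ b \ codimTwoLocus (coxeterArrangement W ∪ ℬ)) (hzc : z ∈ closure c) :
    ∃ s ∈ isotropy W b, ∀ᶠ q in 𝓝 z, q ∈ closure c ∨ q ∈ ⇑s '' c := by
  have h𝒞 := (isArrangement_coxeterArrangement hWfin).union hB
  by_cases hz𝒞 : z ∈ ⋃₀ (coxeterArrangement W ∪ ℬ)
  · -- `z` lies on a single hyperplane, a mirror of `W` since `z ∈ b`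
    obtain ⟨H, hH, hzH⟩ := hz𝒞
    have hHA : H ∈ coxeterArrangement W :=
      hH.resolve_right fun h => subset_compl_of_mem_chambers hb hz.1 ⟨H, h, hzH⟩
    obtain ⟨α, hα, rfl⟩ := mem_coxeterArrangement_iff.mp hHA
    have hsz : reflectionOrth α z = z := reflectionOrth_eq_self_iff.mpr hzH
    have hsb : ⇑(reflectionOrth α) '' b ∈ chambers ℬ :=
      image_mem_chambers (hBW.image_sUnion hα.2) hb
    refine ⟨reflectionOrth α, ⟨hα.2,
      (eq_chamberOf_of_mem hB hsb ⟨z, hz.1, hsz⟩).trans (eq_chamberOf_of_mem hB hb hz.1).symm⟩,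
      eventually_mem_closure_or_mem_image h𝒞 hH ?_ hsz (reflectionOrth_reflectionOrth α)
        (side_reflectionOrth hα.1 (h𝒞.2 _ hH) rfl) hc hzc⟩
    exact fun K hK hzK => by_contra fun hne => hz.2 ⟨K, hK, _, hH, hne, hzK, hzH⟩
  · have hzc' := mem_of_mem_closure h𝒞 hc hz𝒞 hzc
    exact ⟨1, ⟨one_mem W, by simp⟩, Filter.mem_of_superset
      ((isOpen_of_mem_chambers h𝒞 hc).mem_nhds hzc') fun q hq => Or.inl (subset_closure hq)⟩

lemma diff_codimTwoLocus_inter_subset_interior (hWfin : (W : Set (E ≃ₗᵢ[ℝ] E)).Finite)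
    (hB : IsArrangement ℬ) (hBW : WStable W ℬ) (hb : b ∈ chambers ℬ) {c : Set E}
    (hc : c ∈ chambers (coxeterArrangement W ∪ ℬ)) :
    (b \ codimTwoLocus (coxeterArrangement W ∪ ℬ)) ∩ ⋃ u ∈ isotropy W b, closure (⇑u '' c) ⊆
      interior (⋃ u ∈ isotropy W b, closure (⇑u '' c)) := by
  have h𝒞W := (wStable_coxeterArrangement (W := W)).union hBW
  rintro z ⟨hz, hzF⟩
  obtain ⟨u, hu, hzu⟩ := mem_iUnion₂.mp hzF
  obtain ⟨s, ⟨hs, hsb⟩, hev⟩ := exists_mem_isotropy_eventually_mem hWfin hB hBW hb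
    (image_mem_chambers (h𝒞W.image_sUnion hu.1) hc) hz hzu
  refine mem_interior_iff_mem_nhds.mpr (hev.mono fun q hq => mem_iUnion₂.mpr ?_)
  rcases hq with hq | hq
  · exact ⟨u, hu, hq⟩
  · rw [← image_comp, ← LinearIsometryEquiv.coe_mul] at hq
    refine ⟨s * u, ⟨mul_mem hs hu.1, ?_⟩, subset_closure hq⟩
    rw [LinearIsometryEquiv.coe_mul, image_comp, hu.2, hsb]

theorem exists_mem_isotropy_image_eq (hWfin : (W : Set (E ≃ₗᵢ[ℝ] E)).Finite)
    (hB : IsArrangement ℬ) (hBW : WStable W ℬ) (hb : b ∈ chambers ℬ) {c₁ c₂ : Set E}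
    (hc₁ : c₁ ∈ chambers (coxeterArrangement W ∪ ℬ)) (hc₁b : c₁ ⊆ b)
    (hc₂ : c₂ ∈ chambers (coxeterArrangement W ∪ ℬ)) (hc₂b : c₂ ⊆ b) :
    ∃ u ∈ isotropy W b, ⇑u '' c₁ = c₂ := by
  set 𝒞 := coxeterArrangement W ∪ ℬ
  have h𝒞 : IsArrangement 𝒞 := (isArrangement_coxeterArrangement hWfin).union hB
  have h𝒞W : WStable W 𝒞 := wStable_coxeterArrangement.union hBW
  have hgen : ∀ c ∈ chambers 𝒞, c ⊆ b → ∀ x ∈ c, x ∈ b \ codimTwoLocus 𝒞 := fun c hc hcb x hx =>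
    ⟨hcb hx, fun ⟨H, hH, _, _, _, hxH, _⟩ => subset_compl_of_mem_chambers hc hx ⟨H, hH, hxH⟩⟩
  set F := ⋃ u ∈ isotropy W b, closure (⇑u '' c₁)
  have hF : IsClosed F :=
    (hWfin.subset fun _ hu => hu.1).isClosed_biUnion fun _ _ => isClosed_closure
  have hint := diff_codimTwoLocus_inter_subset_interior hWfin hB hBW hb hc₁
  obtain ⟨x₁, hx₁⟩ := nonempty_of_mem_chambers hc₁
  obtain ⟨x₂, hx₂⟩ := nonempty_of_mem_chambers hc₂
  have hx₁F : x₁ ∈ F := mem_iUnion₂.mpr ⟨1, ⟨one_mem W, by simp⟩, subset_closure (by simpa)⟩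
  have hsub : b \ codimTwoLocus 𝒞 ⊆ interior F :=
    (isPreconnected_diff_codimTwoLocus h𝒞 (isOpen_of_mem_chambers hB hb)
      (convex_of_mem_chambers hB hb)).subset_of_closure_inter_subset isOpen_interior
      ⟨x₁, hgen c₁ hc₁ hc₁b x₁ hx₁, hint ⟨hgen c₁ hc₁ hc₁b x₁ hx₁, hx₁F⟩⟩
      fun z ⟨hz, hzX⟩ => hint ⟨hzX, closure_minimal interior_subset hF hz⟩
  obtain ⟨u, hu, hx₂u⟩ := mem_iUnion₂.mp (interior_subset (hsub (hgen c₂ hc₂ hc₂b x₂ hx₂)))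
  have huc₁ := image_mem_chambers (h𝒞W.image_sUnion hu.1) hc₁
  refine ⟨u, hu, (eq_chamberOf_of_mem h𝒞 huc₁ ?_).trans (eq_chamberOf_of_mem h𝒞 hc₂ hx₂).symm⟩
  exact mem_of_mem_closure h𝒞 huc₁ (subset_compl_of_mem_chambers hc₂ hx₂) hx₂u

end Fiber

theorem isotropy_free_transitive_on_fiber_general
    (W : Subgroup (E ≃ₗᵢ[ℝ] E)) (hWfin : (W : Set (E ≃ₗᵢ[ℝ] E)).Finite)
    (hW : IsReflectionGroup W)
    (ℬ : Set (Set E)) (hB : IsArrangement ℬ) (hBW : WStable W ℬ)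
    (b : Set E) (hb : b ∈ chambers ℬ) :
    (∀ w ∈ W, (⇑w) '' b = b →
      ∀ c ∈ chambers (coxeterArrangement W ∪ ℬ), c ⊆ b → (⇑w) '' c = c → w = 1) ∧
    (∀ c₁ ∈ chambers (coxeterArrangement W ∪ ℬ), c₁ ⊆ b →
      ∀ c₂ ∈ chambers (coxeterArrangement W ∪ ℬ), c₂ ⊆ b →
        ∃ w ∈ W, (⇑w) '' b = b ∧ (⇑w) '' c₁ = c₂) :=
  ⟨fun _ hw _ _ hc _ hwc => eq_one_of_image_chamber_eq hWfin hW
      ((isArrangement_coxeterArrangement hWfin).union hB) subset_union_left hw hc hwc,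
    fun _ hc₁ hc₁b _ hc₂ hc₂b => by
      obtain ⟨u, ⟨hu, hub⟩, huc⟩ := exists_mem_isotropy_image_eq hWfin hB hBW hb hc₁ hc₁b hc₂ hc₂b
      exact ⟨u, hu, hub, huc⟩⟩

/-- For every chamber `b` of `ℬ`, the isotropy subgroup `W_b` acts freely and transitively
on the set of chambers of `C = A ∪ B` contained in `b`. -/
theorem isotropy_free_transitive_on_fiber
    (W : Subgroup (E ≃ₗᵢ[ℝ] E)) (hWfin : (W : Set (E ≃ₗᵢ[ℝ] E)).Finite)
    (hW : IsReflectionGroup W)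
    (ℬ : Set (Set E)) (hB : IsArrangement ℬ) (hBW : WStable W ℬ)
    (hdisj : coxeterArrangement W ∩ ℬ = ∅)
    (b : Set E) (hb : b ∈ chambers ℬ) :
    (∀ w ∈ W, (⇑w) '' b = b →
      ∀ c ∈ chambers (coxeterArrangement W ∪ ℬ), c ⊆ b → (⇑w) '' c = c → w = 1) ∧
    (∀ c₁ ∈ chambers (coxeterArrangement W ∪ ℬ), c₁ ⊆ b →
      ∀ c₂ ∈ chambers (coxeterArrangement W ∪ ℬ), c₂ ⊆ b →
        ∃ w ∈ W, (⇑w) '' b = b ∧ (⇑w) '' c₁ = c₂) :=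
  isotropy_free_transitive_on_fiber_general W hWfin hW ℬ hB hBW b hb
end

section
/- Let W be a finite Coxeter group with Coxeter arrangement A, and B a W-stable arrangement disjoint from A. For x ∈ V not on any hyperplane of B, let b be the chamber of B containing x and z(x) = (1/|W_b|) Σ_{w ∈ W_b} wx. Then the isotropy subgroup W_{z(x)} = {w ∈ W : w z(x) = z(x)} equals W_b. In particular W_{z(x)} depends only on the chamber b containing x. -/
open Set

variable {E : Type*} [NormedAddCommGroup E] [InnerProductSpace ℝ E] [FiniteDimensional ℝ E]

/-! A chamber of an arrangement of affine hyperplanes is convex, since each hyperplane leaves the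
whole chamber on one side. Hence `z(x)`, a convex combination of the points `w x ∈ b`, lies in
`b`, and it is fixed by `W_b` because left translation permutes `W_b`. Conversely `W` permutes the
chambers of `ℬ`, so if `w z(x) = z(x)` then the chambers `w b` and `b` share the point `z(x)` and
coincide. -/

theorem IsPreconnected.subset_lt_or_subset_gt {X : Type*} [TopologicalSpace X] {s : Set X}
    (hs : IsPreconnected s) {f : X → ℝ} (hf : Continuous f) {c : ℝ} (hsf : ∀ y ∈ s, f y ≠ c) :
    s ⊆ {y | f y < c} ∨ s ⊆ {y | c < f y} :=
  hs.subset_or_subset (isOpen_lt hf continuous_const) (isOpen_lt continuous_const hf)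
    (disjoint_left.2 fun _ (h₁ : f _ < c) h₂ ↦ h₁.not_gt h₂)
    (fun y hy ↦ (hsf y hy).lt_or_gt)

section

variable {V : Type*} [NormedAddCommGroup V] [InnerProductSpace ℝ V]

theorem convex_of_mem_chambers_s9 [FiniteDimensional ℝ V] {𝒜 : Set (Set V)}
    (h𝒜 : ∀ H ∈ 𝒜, IsAffineHyperplane H) {b : Set V} (hb : b ∈ chambers 𝒜) : Convex ℝ b := by
  obtain ⟨x₀, -, rfl⟩ := hb
  set U := (⋃₀ 𝒜)ᶜ
  have hbU : connectedComponentIn U x₀ ⊆ U := connectedComponentIn_subset _ _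
  refine convex_iff_segment_subset.2 fun y hy y' hy' ↦ ?_
  -- Each hyperplane has the whole chamber, hence the segment, strictly on one side.
  have hseg : segment ℝ y y' ⊆ U := by
    rintro p hp ⟨H, hH, hpH⟩
    obtain ⟨f, c, -, rfl⟩ := h𝒜 H hH
    have hoff : ∀ q ∈ connectedComponentIn U x₀, f q ≠ c :=
      fun q hq hqc ↦ hbU hq ⟨_, hH, hqc⟩
    rcases isPreconnected_connectedComponentIn.subset_lt_or_subset_gt
      f.continuous_of_finiteDimensional hoff with hlt | hgt
    · exact (convex_halfSpace_lt f.isLinear c).segment_subset (hlt hy) (hlt hy') hp |>.ne hpH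
    · exact (convex_halfSpace_gt f.isLinear c).segment_subset (hgt hy) (hgt hy') hp |>.ne' hpH
  rw [connectedComponentIn_eq hy]
  exact (convex_segment y y').isPreconnected.subset_connectedComponentIn (left_mem_segment ℝ y y')
    hseg

theorem WStable.image_sUnion_s9 {W : Subgroup (V ≃ₗᵢ[ℝ] V)} {ℬ : Set (Set V)} (hℬ : WStable W ℬ)
    {w : V ≃ₗᵢ[ℝ] V} (hw : w ∈ W) : ⇑w '' ⋃₀ ℬ = ⋃₀ ℬ := by
  have hsub : ∀ v ∈ W, ⇑v '' ⋃₀ ℬ ⊆ ⋃₀ ℬ := by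
    rintro v hv _ ⟨y, ⟨H, hH, hyH⟩, rfl⟩
    exact ⟨v '' H, hℬ v hv H hH, mem_image_of_mem v hyH⟩
  refine (hsub w hw).antisymm fun y hy ↦ ⟨w⁻¹ y, hsub _ (W.inv_mem hw) ⟨y, hy, rfl⟩, ?_⟩
  simp

theorem WStable.image_connectedComponentIn {W : Subgroup (V ≃ₗᵢ[ℝ] V)} {ℬ : Set (Set V)}
    (hℬ : WStable W ℬ) {w : V ≃ₗᵢ[ℝ] V} (hw : w ∈ W) {z : V} (hz : z ∈ (⋃₀ ℬ)ᶜ) :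
    ⇑w '' connectedComponentIn (⋃₀ ℬ)ᶜ z = connectedComponentIn (⋃₀ ℬ)ᶜ (w z) := by
  have := w.toHomeomorph.image_connectedComponentIn hz
  rwa [LinearIsometryEquiv.coe_toHomeomorph, image_compl_eq w.bijective, hℬ.image_sUnion_s9 hw]
    at this

end

section

variable {V : Type*} [SeminormedAddCommGroup V] [NormedSpace ℝ V]

def setStabilizer (W : Subgroup (V ≃ₗᵢ[ℝ] V)) (b : Set V) : Subgroup (V ≃ₗᵢ[ℝ] V) where
  carrier := {w | w ∈ W ∧ ⇑w '' b = b}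
  one_mem' := ⟨W.one_mem, by simp⟩
  mul_mem' := fun ⟨hw, hwb⟩ ⟨hv, hvb⟩ ↦ ⟨W.mul_mem hw hv, by
    rw [LinearIsometryEquiv.coe_mul, image_comp, hvb, hwb]⟩
  inv_mem' := fun {w} ⟨hw, hwb⟩ ↦ ⟨W.inv_mem hw, by
    conv_lhs => rw [← hwb]
    simp [← image_comp]⟩

noncomputable def orbitAverage (K : Subgroup (V ≃ₗᵢ[ℝ] V)) (hK : (K : Set (V ≃ₗᵢ[ℝ] V)).Finite)
    (x : V) : V :=
  (hK.toFinset.card : ℝ)⁻¹ • ∑ u ∈ hK.toFinset, u x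

variable {K : Subgroup (V ≃ₗᵢ[ℝ] V)} (hK : (K : Set (V ≃ₗᵢ[ℝ] V)).Finite)

theorem apply_orbitAverage {w : V ≃ₗᵢ[ℝ] V} (hw : w ∈ K) (x : V) :
    w (orbitAverage K hK x) = orbitAverage K hK x := by
  rw [orbitAverage, map_smul, map_sum]
  congr 1
  exact Finset.sum_equiv (Equiv.mulLeft w) (fun u ↦ by simp [K.mul_mem_cancel_left hw])
    fun u _ ↦ rfl

theorem orbitAverage_mem {s : Set V} (hs : Convex ℝ s) {x : V} (hKs : ∀ u ∈ K, u x ∈ s) :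
    orbitAverage K hK x ∈ s := by
  have hcard : (hK.toFinset.card : ℝ) ≠ 0 := by
    exact_mod_cast (Finset.card_pos.2 ⟨1, hK.mem_toFinset.2 K.one_mem⟩).ne'
  rw [orbitAverage, Finset.smul_sum]
  refine hs.sum_mem (fun _ _ ↦ by positivity) ?_ fun u hu ↦ hKs u (hK.mem_toFinset.1 hu)
  rw [Finset.sum_const, nsmul_eq_mul, mul_inv_cancel₀ hcard]

end

theorem isotropy_of_average_eq_isotropy_of_chamber_general
    (W : Subgroup (E ≃ₗᵢ[ℝ] E))
    (ℬ : Set (Set E)) (hB : IsArrangement ℬ) (hBW : WStable W ℬ)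
    (b : Set E) (hb : b ∈ chambers ℬ) (x : E) (hx : x ∈ b)
    (hWbfin : {w : E ≃ₗᵢ[ℝ] E | w ∈ W ∧ (⇑w) '' b = b}.Finite) :
    ∀ z : E,
      z = ((hWbfin.toFinset.card : ℝ))⁻¹ • ∑ w ∈ hWbfin.toFinset, w x →
      {w : E ≃ₗᵢ[ℝ] E | w ∈ W ∧ w z = z} = {w : E ≃ₗᵢ[ℝ] E | w ∈ W ∧ (⇑w) '' b = b} := by
  intro z hz
  change z = orbitAverage (setStabilizer W b) hWbfin x at hz
  have hzb : z ∈ b := hz ▸ orbitAverage_mem hWbfin (convex_of_mem_chambers_s9 hB.2 hb)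
    fun u hu ↦ hu.2 ▸ mem_image_of_mem u hx
  obtain ⟨x₀, -, rfl⟩ := hb
  have hbz := connectedComponentIn_eq hzb
  ext w
  refine ⟨fun ⟨hw, hwz⟩ ↦ ⟨hw, ?_⟩, fun hw ↦ ⟨hw.1, hz ▸ apply_orbitAverage hWbfin hw x⟩⟩
  rw [hbz, hBW.image_connectedComponentIn hw (connectedComponentIn_subset _ _ hzb), hwz]

/-- For `x` off the hyperplanes of `ℬ`, lying in the chamber `b` of `ℬ`, the isotropy
subgroup of the average `z(x) = (1/|W_b|) Σ_{w ∈ W_b} w x` equals `W_b`.  In particular it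
depends only on the chamber `b` containing `x`. -/
theorem isotropy_of_average_eq_isotropy_of_chamber
    (W : Subgroup (E ≃ₗᵢ[ℝ] E)) (hWfin : (W : Set (E ≃ₗᵢ[ℝ] E)).Finite)
    (hW : IsReflectionGroup W)
    (ℬ : Set (Set E)) (hB : IsArrangement ℬ) (hBW : WStable W ℬ)
    (hdisj : coxeterArrangement W ∩ ℬ = ∅)
    (b : Set E) (hb : b ∈ chambers ℬ) (x : E) (hx : x ∈ b)
    (hWbfin : {w : E ≃ₗᵢ[ℝ] E | w ∈ W ∧ (⇑w) '' b = b}.Finite) :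
    ∀ z : E,
      z = ((hWbfin.toFinset.card : ℝ))⁻¹ • ∑ w ∈ hWbfin.toFinset, w x →
      {w : E ≃ₗᵢ[ℝ] E | w ∈ W ∧ w z = z} = {w : E ≃ₗᵢ[ℝ] E | w ∈ W ∧ (⇑w) '' b = b} :=
  isotropy_of_average_eq_isotropy_of_chamber_general W ℬ hB hBW b hb x hx hWbfin
end

section
/- Let W = S_m act on H_0 = {x ∈ R^m : x_1 + ... + x_m = 0} by permuting coordinates, let A be the braid arrangement in H_0 (hyperplanes x_i = x_j, i < j), and let B be the essentialized semiorder arrangement (hyperplanes x_i = x_j + 1 for i ≠ j), so that C = A ∪ B is the essentialized Catalan arrangement. Then the number of chambers of C contained in the chamber a : x_1 > x_2 > ... > x_m of A equals the Catalan number C_m = (1/(m+1))·binom(2m, m), and hence |Ch(C)| = m!·C_m = (2m)(2m−1)···(m+2). -/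
/-
A point `x` of the complement has distinct coordinates; let `σ` sort them decreasingly and let
`f i` be the least position `j` with `x (σ j) < x (σ i) + 1`. Then `f` is monotone with
`f i ≤ i`, and the points with the same data `(σ, f)` form an open convex cell. A cell is the
connected component of each of its points: the linear forms `x a - x b` and `x a - x b - 1`
cut out the cell and have no zero on the complement, so by the intermediate value theorem they
keep their sign on every connected subset of it. Every monotone subdiagonal `f` is realised,
choosing the coordinates one at a time, so the chambers correspond to the pairs `(σ, f)`, and
those inside `x₁ > ⋯ > x_m` to `σ = 1`. Decomposing `f` at its first positive fixed point gives
the Catalan recursion for the number of such `f`.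
-/

open Set Finset

/-- The chambers of (the portion of space cut out by) a locally closed set `F`:
connected components of `F`. -/
def chambersOf {X : Type*} [TopologicalSpace X] (F : Set X) : Set (Set X) :=
  {c | ∃ x ∈ F, c = connectedComponentIn F x}

/-- The complement, inside `H₀ = {Σ xᵢ = 0}`, of the essentialized Catalan arrangement
`C = A ∪ B` (hyperplanes `xᵢ = xⱼ` and `xᵢ = xⱼ + 1`, `i ≠ j`). -/
def catalanComplement (m : ℕ) : Set (Fin m → ℝ) :=
  {x | ∑ i, x i = 0 ∧ ∀ i j : Fin m, i ≠ j → x i ≠ x j ∧ x i ≠ x j + 1}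

structure IsCatalanSeq (m : ℕ) (f : ℕ → ℕ) : Prop where
  monotone : Monotone f
  le_self : ∀ t, f t ≤ t
  eq_self : ∀ t, m ≤ t → f t = t

abbrev CatalanSeq (m : ℕ) : Type := {f : ℕ → ℕ // IsCatalanSeq m f}

namespace CatalanSeq

theorem ext_of_lt {m : ℕ} {f g : CatalanSeq m} (h : ∀ t < m, f.1 t = g.1 t) : f = g :=
  Subtype.ext <| funext fun t =>
    (lt_or_ge t m).elim (h t) fun ht => by rw [f.2.eq_self t ht, g.2.eq_self t ht]

instance (m : ℕ) : Finite (CatalanSeq m) :=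
  Finite.of_injective (fun f (i : Fin m) => (⟨f.1 i, (f.2.le_self i).trans_lt i.2⟩ : Fin m))
    fun _ _ h => ext_of_lt fun t ht => congrArg Fin.val (congrFun h ⟨t, ht⟩)

/-- `join (i + 1) f g` has `i + 1` as its first positive fixed point: it is `f` shifted right by
one on `[0, i]` (at `0` it reads `f 0 = 0`), followed by `g` shifted by `i + 1`. -/
def join (k : ℕ) (f g : ℕ → ℕ) (t : ℕ) : ℕ :=
  if t < k then f (t - 1) else g (t - k) + k

variable {i n : ℕ} {f g : ℕ → ℕ}

theorem isCatalanSeq_join (hi : i ≤ n) (hf : IsCatalanSeq i f) (hg : IsCatalanSeq (n - i) g) :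
    IsCatalanSeq (n + 1) (join (i + 1) f g) where
  monotone a b hab := by
    have := hf.monotone (Nat.sub_le_sub_right hab 1)
    have := hg.monotone (Nat.sub_le_sub_right hab (i + 1))
    have := hf.le_self (a - 1)
    simp only [join]
    split_ifs <;> omega
  le_self t := by
    have := hf.le_self (t - 1)
    have := hg.le_self (t - (i + 1))
    simp only [join]
    split_ifs <;> omega
  eq_self t ht := by
    have := hg.eq_self (t - (i + 1)) (by omega)
    simp only [join]
    split_ifs <;> omega

theorem join_apply_lt_self (hf : IsCatalanSeq i f) {t : ℕ} (h0 : 0 < t) (ht : t < i + 1) :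
    join (i + 1) f g t < t := by
  have := hf.le_self (t - 1)
  simp only [join, if_pos ht]
  omega

theorem join_apply_self (hg : IsCatalanSeq n g) : join (i + 1) f g (i + 1) = i + 1 := by
  have := hg.le_self 0
  simp only [join, lt_irrefl, if_false, Nat.sub_self]
  omega

def sigmaJoin (n : ℕ) :
    (Σ i : Fin (n + 1), CatalanSeq i × CatalanSeq (n - i)) → CatalanSeq (n + 1) :=
  fun p => ⟨join (p.1 + 1) p.2.1.1 p.2.2.1,
    isCatalanSeq_join (Nat.lt_succ_iff.1 p.1.2) p.2.1.2 p.2.2.2⟩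

theorem sigmaJoin_injective (n : ℕ) : Function.Injective (sigmaJoin n) := by
  rintro ⟨i, f, g⟩ ⟨j, f', g'⟩ h
  have hF : join (i + 1) f.1 g.1 = join (j + 1) f'.1 g'.1 := congrArg Subtype.val h
  obtain rfl : i = j := by
    refine Fin.ext (le_antisymm ?_ ?_) <;> by_contra! hlt
    · have := join_apply_lt_self (g := g.1) f.2 (t := j + 1) (by omega) (by omega)
      rw [hF, join_apply_self g'.2] at this
      exact lt_irrefl _ this
    · have := join_apply_lt_self (g := g'.1) f'.2 (t := i + 1) (by omega) (by omega)
      rw [← hF, join_apply_self g.2] at this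
      exact lt_irrefl _ this
  obtain rfl : f = f' := ext_of_lt fun t ht => by
    simpa [join, ht] using congrFun hF (t + 1)
  obtain rfl : g = g' := ext_of_lt fun t _ => by
    simpa only [join, if_neg (Nat.not_lt.2 (Nat.le_add_left _ t)), Nat.add_sub_cancel,
      Nat.add_right_cancel_iff] using congrFun hF (t + (i + 1))
  rfl

theorem sigmaJoin_surjective (n : ℕ) : Function.Surjective (sigmaJoin n) := by
  intro F
  have hex : ∃ k, 0 < k ∧ F.1 k = k := ⟨n + 1, n.succ_pos, F.2.eq_self _ le_rfl⟩
  obtain ⟨k, ⟨hk0, hkF⟩, hmin⟩ : ∃ k, (0 < k ∧ F.1 k = k) ∧ ∀ t, 0 < t → t < k → F.1 t < t :=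
    ⟨Nat.find hex, Nat.find_spec hex, fun t h0 ht =>
      (F.2.le_self t).lt_of_ne fun h => Nat.find_min hex ht ⟨h0, h⟩⟩
  have hkn : k ≤ n + 1 := by
    by_contra! hk
    exact (hmin (n + 1) n.succ_pos hk).ne (F.2.eq_self _ le_rfl)
  let f : ℕ → ℕ := fun t => if t < k - 1 then F.1 (t + 1) else t
  let g : ℕ → ℕ := fun t => F.1 (t + k) - k
  have hf : IsCatalanSeq (k - 1) f := by
    refine ⟨fun a b hab => ?_, fun t => ?_, fun t ht => if_neg (by omega)⟩
    · have := F.2.monotone (Nat.succ_le_succ hab)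
      simp only [f]
      split_ifs with ha hb
      · exact this
      · have := hmin (a + 1) (by omega) (by omega); omega
      · omega
      · exact hab
    · simp only [f]
      split_ifs with ht
      · have := hmin (t + 1) (by omega) (by omega); omega
      · exact le_rfl
  have hg : IsCatalanSeq (n - (k - 1)) g := by
    refine ⟨fun a b hab => Nat.sub_le_sub_right (F.2.monotone (by omega)) k, fun t => ?_,
      fun t ht => ?_⟩
    · have := F.2.le_self (t + k); simp only [g]; omega
    · have := F.2.eq_self (t + k) (by omega); simp only [g]; omega
  refine ⟨⟨⟨k - 1, by omega⟩, ⟨f, hf⟩, ⟨g, hg⟩⟩, Subtype.ext (funext fun t => ?_)⟩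
  change join (k - 1 + 1) f g t = F.1 t
  rw [Nat.sub_add_cancel hk0, join]
  rcases lt_or_ge t k with htk | htk
  · rw [if_pos htk]
    rcases Nat.eq_zero_or_pos t with rfl | ht0
    · have := F.2.le_self 0
      simp only [f, Nat.zero_sub, zero_add]
      split_ifs
      · have := hmin 1 one_pos (by omega); omega
      · omega
    · simp only [f, if_pos (by omega : t - 1 < k - 1), Nat.sub_add_cancel ht0]
  · have : k ≤ F.1 t := hkF ▸ F.2.monotone htk
    simp only [g, if_neg (Nat.not_lt.2 htk), Nat.sub_add_cancel htk]
    omega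

end CatalanSeq

theorem card_catalanSeq (m : ℕ) : Nat.card (CatalanSeq m) = catalan m := by
  induction m using Nat.strong_induction_on with
  | _ m ih =>
  cases m with
  | zero =>
    rw [catalan_zero, Nat.card_eq_one_iff_unique]
    exact ⟨⟨fun f g => CatalanSeq.ext_of_lt fun t ht => absurd ht t.not_lt_zero⟩,
      ⟨⟨id, monotone_id, fun _ => le_rfl, fun _ _ => rfl⟩⟩⟩
  | succ n =>
    rw [← Nat.card_congr (Equiv.ofBijective _ ⟨CatalanSeq.sigmaJoin_injective n,
      CatalanSeq.sigmaJoin_surjective n⟩), Nat.card_sigma, catalan_succ]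
    refine Finset.sum_congr rfl fun i _ => ?_
    rw [Nat.card_prod, ih i (by omega), ih (n - i) (by omega)]

/-- `[f i, i]` is the largest interval of positions ending at `i` on which `z j < z i + 1`: these
are the paper's maximal intervals with `x_j - x_i < 1`, which index the chambers. -/
def IsCatalanPattern {m : ℕ} (f : ℕ → ℕ) (z : Fin m → ℝ) : Prop :=
  ∀ i j : Fin m, j < i → z i < z j ∧ ((j : ℕ) < f i → z i + 1 < z j) ∧ (f i ≤ j → z j < z i + 1)

namespace IsCatalanPattern

variable {m : ℕ} {f f' : ℕ → ℕ} {z : Fin m → ℝ}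

theorem strictAnti (h : IsCatalanPattern f z) : StrictAnti z := fun _ _ hji => (h _ _ hji).1

theorem sub_const (h : IsCatalanPattern f z) (c : ℝ) : IsCatalanPattern f fun i => z i - c := by
  intro i j hji
  obtain ⟨hlt, hfar, hnear⟩ := h i j hji
  exact ⟨by linarith, fun hj => by linarith [hfar hj], fun hj => by linarith [hnear hj]⟩

theorem apply_le (hf : ∀ t, f t ≤ t) (h : IsCatalanPattern f z) (h' : IsCatalanPattern f' z)
    (i : Fin m) : f i ≤ f' i := by
  by_contra! hlt
  have hj : f' i < m := by have := hf i; omega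
  obtain ⟨-, hfar, -⟩ := h i ⟨f' i, hj⟩ (by have := hf i; simp only [Fin.lt_def]; omega)
  obtain ⟨-, -, hnear⟩ := h' i ⟨f' i, hj⟩ (by have := hf i; simp only [Fin.lt_def]; omega)
  linarith [hfar hlt, hnear le_rfl]

theorem exists_snoc (hmono : Monotone f) (h : IsCatalanPattern f z) :
    ∃ v, IsCatalanPattern f (Fin.snoc z v : Fin (m + 1) → ℝ) := by
  -- `v` must lie above each `z j - 1` with `f m ≤ j` and below each `z j` and each `z j - 1`
  -- with `j < f m`; monotonicity of `f` makes every lower bound smaller than every upper one.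
  obtain ⟨v, hlower, hupper⟩ := Set.Finite.exists_between'
    (s := (fun j => z j - 1) '' {j | f m ≤ j}) (t := range z ∪ (fun j => z j - 1) '' {j | j < f m})
    (Set.toFinite _) (Set.toFinite _) (by
      rintro _ ⟨k, hk, rfl⟩ _ (⟨j, rfl⟩ | ⟨j, hj, rfl⟩)
      · rcases lt_trichotomy j k with hjk | rfl | hkj
        · linarith [(h k j hjk).1]
        · linarith
        · linarith [(h j k hkj).2.2 ((hmono (by omega : (j : ℕ) ≤ m)).trans hk)]
      · linarith [(h k j (Fin.lt_def.2 (by simp only [mem_ofPred_eq] at hj hk; omega))).1])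
  refine ⟨v, fun i j hji => ?_⟩
  obtain ⟨j, rfl⟩ := Fin.exists_castSucc_eq.2 (Fin.ne_last_of_lt hji)
  induction i using Fin.lastCases with
  | last =>
    simp only [Fin.snoc_last, Fin.snoc_castSucc, Fin.val_castSucc, Fin.val_last]
    refine ⟨hupper _ (Or.inl ⟨j, rfl⟩), fun hj => ?_, fun hj => ?_⟩
    · linarith [hupper _ (Or.inr ⟨j, hj, rfl⟩)]
    · linarith [hlower _ ⟨j, hj, rfl⟩]
  | cast i =>
    simp only [Fin.snoc_castSucc, Fin.val_castSucc]
    exact h i j (Fin.castSucc_lt_castSucc_iff.1 hji)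

end IsCatalanPattern

theorem exists_isCatalanPattern {f : ℕ → ℕ} (hmono : Monotone f) :
    ∀ m, ∃ z : Fin m → ℝ, IsCatalanPattern f z
  | 0 => ⟨Fin.elim0, fun i => i.elim0⟩
  | m + 1 => by
    obtain ⟨z, hz⟩ := exists_isCatalanPattern hmono m
    obtain ⟨v, hv⟩ := hz.exists_snoc hmono
    exact ⟨_, hv⟩

theorem IsCatalanSeq.eq_of_isCatalanPattern {m : ℕ} {f g : ℕ → ℕ} {z : Fin m → ℝ}
    (hf : IsCatalanSeq m f) (hg : IsCatalanSeq m g) (hfz : IsCatalanPattern f z)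
    (hgz : IsCatalanPattern g z) : f = g := by
  funext t
  by_cases ht : t < m
  · exact (hfz.apply_le hf.le_self hgz ⟨t, ht⟩).antisymm (hgz.apply_le hg.le_self hfz ⟨t, ht⟩)
  · rw [hf.eq_self t (not_lt.1 ht), hg.eq_self t (not_lt.1 ht)]

theorem exists_isCatalanSeq_isCatalanPattern {m : ℕ} {z : Fin m → ℝ} (hz : StrictAnti z)
    (hne : ∀ i j, z j ≠ z i + 1) : ∃ f, IsCatalanSeq m f ∧ IsCatalanPattern f z := by
  set near : Fin m → Set ℕ := fun i => Fin.val '' {j | z j < z i + 1}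
  have self_mem : ∀ i, (i : ℕ) ∈ near i := fun i => ⟨i, by simp, rfl⟩
  have sInf_mem : ∀ i, ∃ k : Fin m, z k < z i + 1 ∧ (k : ℕ) = sInf (near i) :=
    fun i => Nat.sInf_mem ⟨i, self_mem i⟩
  let f : ℕ → ℕ := fun t => if h : t < m then sInf (near ⟨t, h⟩) else t
  have hf : ∀ i : Fin m, f i = sInf (near i) := fun i => dif_pos i.2
  have hf_le : ∀ i : Fin m, f i ≤ i := fun i => (hf i).trans_le (Nat.sInf_le (self_mem i))
  refine ⟨f, ⟨fun a b hab => ?_, fun t => ?_, fun t ht => dif_neg (by omega)⟩, fun i j hji => ?_⟩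
  · by_cases hb : b < m
    · obtain ⟨k, hk, hkb⟩ := sInf_mem ⟨b, hb⟩
      have ha : a < m := hab.trans_lt hb
      have : z ⟨b, hb⟩ ≤ z ⟨a, ha⟩ := hz.antitone (Fin.le_def.2 hab)
      rw [hf ⟨a, ha⟩, hf ⟨b, hb⟩, ← hkb]
      exact Nat.sInf_le ⟨k, by simp only [mem_ofPred_eq]; linarith, rfl⟩
    · rw [show f b = b from dif_neg hb]
      by_cases ha : a < m
      · exact (hf_le ⟨a, ha⟩).trans hab
      · rwa [show f a = a from dif_neg ha]
  · by_cases ht : t < m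
    · exact hf_le ⟨t, ht⟩
    · exact (dif_neg ht).le
  · refine ⟨hz hji, fun hj => ?_, fun hj => ?_⟩
    · have hnot : (j : ℕ) ∉ near i := Nat.notMem_of_lt_sInf (hf i ▸ hj)
      have : z i + 1 ≤ z j := not_lt.1 fun h => hnot ⟨j, h, rfl⟩
      exact this.lt_of_ne (hne i j).symm
    · obtain ⟨k, hk, hki⟩ := sInf_mem i
      have : z j ≤ z k := hz.antitone (Fin.le_def.2 (hki ▸ hf i ▸ hj))
      linarith

theorem convex_combo_lt {a b u₁ u₂ v₁ v₂ : ℝ} (ha : 0 ≤ a) (hb : 0 ≤ b) (hab : a + b = 1)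
    (h₁ : u₁ < v₁) (h₂ : u₂ < v₂) : a * u₁ + b * u₂ < a * v₁ + b * v₂ := by
  rcases le_total (v₁ - u₁) (v₂ - u₂) with h | h
  · nlinarith [mul_nonneg hb (sub_nonneg.2 h)]
  · nlinarith [mul_nonneg ha (sub_nonneg.2 h)]

theorem convex_setOf_isCatalanPattern (m : ℕ) (f : ℕ → ℕ) :
    Convex ℝ {z : Fin m → ℝ | IsCatalanPattern f z} := by
  intro z hz w hw a b ha hb hab i j hji
  obtain ⟨hz₁, hz₂, hz₃⟩ := hz i j hji
  obtain ⟨hw₁, hw₂, hw₃⟩ := hw i j hji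
  have shift : ∀ u v : ℝ, a * (u + 1) + b * (v + 1) = a * u + b * v + 1 := by
    intro u v; linear_combination hab
  simp only [Pi.add_apply, Pi.smul_apply, smul_eq_mul]
  refine ⟨convex_combo_lt ha hb hab hz₁ hw₁, fun hj => ?_, fun hj => ?_⟩
  · simpa only [shift] using convex_combo_lt ha hb hab (hz₂ hj) (hw₂ hj)
  · simpa only [shift] using convex_combo_lt ha hb hab (hz₃ hj) (hw₃ hj)

theorem lt_of_mem_connectedComponentIn {X : Type*} [TopologicalSpace X] {F : Set X}
    {g h : X → ℝ} (hg : Continuous g) (hh : Continuous h) (hne : ∀ z ∈ F, g z ≠ h z) {x y : X}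
    (hy : y ∈ connectedComponentIn F x) (hlt : g x < h x) : g y < h y := by
  have hx : x ∈ F := by
    by_contra hx
    rw [connectedComponentIn_eq_empty hx] at hy
    exact hy
  by_contra! hle
  obtain ⟨z, hz, hgz⟩ := isPreconnected_connectedComponentIn.intermediate_value₂
    (mem_connectedComponentIn hx) hy hg.continuousOn hh.continuousOn hlt.le hle
  exact hne z (connectedComponentIn_subset F x hz) hgz

theorem Equiv.Perm.eq_of_strictAnti_comp {α : Type*} [LinearOrder α] {m : ℕ} {x : Fin m → α}
    {σ τ : Equiv.Perm (Fin m)} (hσ : StrictAnti (x ∘ σ)) (hτ : StrictAnti (x ∘ τ)) : σ = τ := by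
  have h := Tuple.unique_antitone hσ.antitone hτ.antitone
  refine Equiv.ext fun a => (σ.symm_apply_eq.1 (hσ.injective ?_)).symm
  simpa using (congrFun h a).symm

def catalanCell {m : ℕ} (σ : Equiv.Perm (Fin m)) (f : ℕ → ℕ) : Set (Fin m → ℝ) :=
  {x | ∑ i, x i = 0 ∧ IsCatalanPattern f (x ∘ σ)}

section catalanCell

variable {m : ℕ}

theorem convex_catalanCell (σ : Equiv.Perm (Fin m)) (f : ℕ → ℕ) :
    Convex ℝ (catalanCell σ f) := by
  intro x hx y hy a b ha hb hab
  refine ⟨?_, convex_setOf_isCatalanPattern m f hx.2 hy.2 ha hb hab⟩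
  simp only [Pi.add_apply, Pi.smul_apply, smul_eq_mul, Finset.sum_add_distrib, ← Finset.mul_sum,
    hx.1, hy.1, mul_zero, add_zero]

theorem catalanCell_subset_catalanComplement (σ : Equiv.Perm (Fin m)) (f : ℕ → ℕ) :
    catalanCell σ f ⊆ catalanComplement m := by
  intro x hx
  refine ⟨hx.1, fun a b hab => ?_⟩
  obtain ⟨i, rfl⟩ := σ.surjective a
  obtain ⟨j, rfl⟩ := σ.surjective b
  rcases lt_or_gt_of_ne (σ.injective.ne_iff.1 hab) with hij | hji
  · obtain ⟨hlt, hfar, hnear⟩ := hx.2 j i hij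
    simp only [Function.comp_apply] at hlt hfar hnear
    refine ⟨hlt.ne', ?_⟩
    rcases lt_or_ge (i : ℕ) (f j) with hi | hi
    · exact (hfar hi).ne'
    · exact (hnear hi).ne
  · obtain ⟨hlt, -, -⟩ := hx.2 i j hji
    simp only [Function.comp_apply] at hlt
    exact ⟨hlt.ne, (by linarith : x (σ i) < x (σ j) + 1).ne⟩

theorem catalanCell_eq_connectedComponentIn {σ : Equiv.Perm (Fin m)} {f : ℕ → ℕ}
    {x : Fin m → ℝ} (hx : x ∈ catalanCell σ f) :
    catalanCell σ f = connectedComponentIn (catalanComplement m) x := by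
  refine (convex_catalanCell σ f).isPreconnected.subset_connectedComponentIn hx
    (catalanCell_subset_catalanComplement σ f) |>.antisymm fun y hy => ?_
  refine ⟨(connectedComponentIn_subset _ _ hy).1, fun i j hji => ?_⟩
  have hne : σ i ≠ σ j := σ.injective.ne hji.ne'
  obtain ⟨hlt, hfar, hnear⟩ := hx.2 i j hji
  refine ⟨?_, fun hj => ?_, fun hj => ?_⟩
  · exact lt_of_mem_connectedComponentIn (g := fun w => w (σ i)) (h := fun w => w (σ j))
      (by fun_prop) (by fun_prop) (fun w hw => (hw.2 _ _ hne).1) hy hlt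
  · exact lt_of_mem_connectedComponentIn (g := fun w => w (σ i) + 1) (h := fun w => w (σ j))
      (by fun_prop) (by fun_prop) (fun w hw => ((hw.2 _ _ hne.symm).2).symm) hy (hfar hj)
  · exact lt_of_mem_connectedComponentIn (g := fun w => w (σ j)) (h := fun w => w (σ i) + 1)
      (by fun_prop) (by fun_prop) (fun w hw => (hw.2 _ _ hne.symm).2) hy (hnear hj)

theorem catalanCell_nonempty (σ : Equiv.Perm (Fin m)) {f : ℕ → ℕ} (hf : Monotone f) :
    (catalanCell σ f).Nonempty := by
  obtain ⟨z, hz⟩ := exists_isCatalanPattern hf m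
  set c := (∑ i, z i) / m
  refine ⟨fun a => z (σ.symm a) - c, ?_, ?_⟩
  · rw [Finset.sum_sub_distrib, Equiv.sum_comp σ.symm z, Finset.sum_const, Finset.card_univ,
      Fintype.card_fin, nsmul_eq_mul, sub_eq_zero]
    rcases eq_or_ne m 0 with rfl | hm
    · simp
    · exact (mul_div_cancel₀ _ (Nat.cast_ne_zero.2 hm)).symm
  · simpa [Function.comp_def] using hz.sub_const c

theorem exists_mem_catalanCell {x : Fin m → ℝ} (hx : x ∈ catalanComplement m) :
    ∃ (σ : Equiv.Perm (Fin m)) (f : CatalanSeq m), x ∈ catalanCell σ f.1 := by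
  set σ := Tuple.sort (-x)
  have hinj : Function.Injective x := fun a b hab => by
    by_contra hne
    exact (hx.2 a b hne).1 hab
  have hanti : StrictAnti (x ∘ σ) :=
    Antitone.strictAnti_of_injective (fun a b h => neg_le_neg_iff.1 (Tuple.monotone_sort (-x) h))
      (hinj.comp σ.injective)
  have hnear : ∀ i j, (x ∘ σ) j ≠ (x ∘ σ) i + 1 := by
    intro i j
    rcases eq_or_ne i j with rfl | hij
    · simp
    · exact (hx.2 _ _ (σ.injective.ne hij.symm)).2
  obtain ⟨f, hf, hfx⟩ := exists_isCatalanSeq_isCatalanPattern hanti hnear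
  exact ⟨σ, ⟨f, hf⟩, hx.1, hfx⟩

theorem chambersOf_catalanComplement :
    chambersOf (catalanComplement m) =
      range fun p : Equiv.Perm (Fin m) × CatalanSeq m => catalanCell p.1 p.2.1 := by
  ext c
  constructor
  · rintro ⟨x, hx, rfl⟩
    obtain ⟨σ, f, hxc⟩ := exists_mem_catalanCell hx
    exact ⟨(σ, f), catalanCell_eq_connectedComponentIn hxc⟩
  · rintro ⟨⟨σ, f⟩, rfl⟩
    obtain ⟨x, hx⟩ := catalanCell_nonempty σ f.2.monotone
    exact ⟨x, catalanCell_subset_catalanComplement σ f.1 hx,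
      catalanCell_eq_connectedComponentIn hx⟩

theorem catalanCell_injective :
    Function.Injective fun p : Equiv.Perm (Fin m) × CatalanSeq m => catalanCell p.1 p.2.1 := by
  rintro ⟨σ, f⟩ ⟨τ, g⟩ h
  dsimp only at h
  obtain ⟨x, hx⟩ := catalanCell_nonempty σ f.2.monotone
  have hx' : x ∈ catalanCell τ g.1 := h ▸ hx
  obtain rfl := Equiv.Perm.eq_of_strictAnti_comp hx.2.strictAnti hx'.2.strictAnti
  rw [Subtype.ext (f.2.eq_of_isCatalanPattern g.2 hx.2 hx'.2)]

theorem chambersOf_catalanComplement_subset_braidChamber :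
    {c | c ∈ chambersOf (catalanComplement m) ∧
        c ⊆ {x : Fin m → ℝ | ∀ i j : Fin m, i < j → x j < x i}} =
      range fun f : CatalanSeq m => catalanCell 1 f.1 := by
  ext c
  rw [mem_ofPred_eq, chambersOf_catalanComplement]
  constructor
  · rintro ⟨⟨⟨σ, f⟩, rfl⟩, hsub⟩
    obtain ⟨x, hx⟩ := catalanCell_nonempty σ f.2.monotone
    obtain rfl : σ = 1 := Equiv.Perm.eq_of_strictAnti_comp hx.2.strictAnti (hsub hx)
    exact ⟨f, rfl⟩
  · rintro ⟨f, rfl⟩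
    exact ⟨⟨(1, f), rfl⟩, fun x hx => hx.2.strictAnti⟩

end catalanCell

open scoped Nat in
theorem factorial_mul_catalan_eq_prod_Ico (m : ℕ) :
    m ! * catalan m = ∏ i ∈ Ico (m + 2) (2 * m + 1), i := by
  rcases Nat.eq_zero_or_pos m with rfl | hm
  · simp
  refine Nat.eq_of_mul_eq_mul_left (m + 1).factorial_pos ?_
  calc (m + 1)! * (m ! * catalan m) = (m + 1) * catalan m * m ! * m ! := by
        rw [Nat.factorial_succ]; ring
    _ = (2 * m)! := by
        rw [succ_mul_catalan_eq_centralBinom, Nat.centralBinom_eq_two_mul_choose,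
          ← Nat.choose_mul_factorial_mul_factorial (by omega : m ≤ 2 * m), two_mul,
          Nat.add_sub_cancel]
    _ = (m + 1)! * ∏ i ∈ Ico (m + 2) (2 * m + 1), i := by
        rw [← prod_Ico_id_eq_factorial, ← prod_Ico_id_eq_factorial,
          prod_Ico_consecutive _ (by omega) (by omega)]

/-- The number of chambers of the essentialized Catalan arrangement contained in the
chamber `a : x₁ > ⋯ > x_m` of the braid arrangement is the Catalan number `C_m`; hence
`|Ch(C)| = m!·C_m = (2m)(2m-1)⋯(m+2)`. -/
theorem catalan_chambers_in_braid_chamber (m : ℕ) :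
    {c : Set (Fin m → ℝ) | c ∈ chambersOf (catalanComplement m) ∧
        c ⊆ {x : Fin m → ℝ | ∀ i j : Fin m, i < j → x j < x i}}.ncard = catalan m ∧
    (chambersOf (catalanComplement m)).ncard = Nat.factorial m * catalan m ∧
    Nat.factorial m * catalan m = ∏ i ∈ Finset.Ico (m + 2) (2 * m + 1), i := by
  refine ⟨?_, ?_, factorial_mul_catalan_eq_prod_Ico m⟩
  · rw [chambersOf_catalanComplement_subset_braidChamber,
      ncard_range_of_injective (f := fun f : CatalanSeq m => catalanCell 1 f.1)
        (catalanCell_injective.comp (Prod.mk_right_injective 1)),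
      card_catalanSeq]
  · rw [chambersOf_catalanComplement, ncard_range_of_injective catalanCell_injective,
      Nat.card_prod, Nat.card_perm, Nat.card_fin, card_catalanSeq]
end

section
/- There is a bijection between the set of chambers of the (essentialized) semiorder arrangement B in H_0 ⊂ R^m and the set of semiorders on {1, ..., m}, given by sending a chamber b to the partial order ⪰ defined by i ≻ j ⟺ x_i > x_j + 1 for any point (x_1, ..., x_m) ∈ b. -/
open Set

/-- The complement, inside `H₀`, of the essentialized semiorder arrangement
(hyperplanes `xᵢ = xⱼ + 1`, `i ≠ j`). -/
def semiorderComplement (m : ℕ) : Set (Fin m → ℝ) :=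
  {x | ∑ i, x i = 0 ∧ ∀ i j : Fin m, i ≠ j → x i ≠ x j + 1}

/-- `r` is (the strict order of) a semiorder: an irreflexive transitive relation with
no induced `2+2` and no induced `3+1`. -/
def IsSemiorder {α : Type*} (r : α → α → Prop) : Prop :=
  (∀ a, ¬r a a) ∧ (∀ a b c, r a b → r b c → r a c) ∧
  (∀ a b c d, r a b → r c d → r a d ∨ r c b) ∧
  (∀ a b c d, r a b → r b c → r a d ∨ r d c)

/-!
Every point `x` of the complement induces the relation `i ≻ j ⟺ x j + 1 < x i`, which is a
semiorder, and this relation is constant on a chamber because each `x i - x j` is continuous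
and never equal to `1` there. Two points inducing the same relation lie on the same side of
every hyperplane, so the segment between them stays in the complement: the map is injective.
Surjectivity is the finite Scott–Suppes theorem. The trace of a semiorder is a total preorder;
adding a trace-maximal element to a strict representation of the rest leaves finitely many
compatible strict bounds on its value. Strictness keeps the point off the hyperplanes, and a
translation moves it into `H₀`.
-/

open Function

variable {α : Type*}

def unitIntervalOrder (x : α → ℝ) (i j : α) : Prop :=
  x j + 1 < x i

theorem isSemiorder_unitIntervalOrder (x : α → ℝ) : IsSemiorder (unitIntervalOrder x) := by
  unfold unitIntervalOrder
  refine ⟨fun _ => by simp, fun _ _ _ _ _ => by linarith, fun a b c d h₁ h₂ => ?_,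
    fun a b c d h₁ h₂ => ?_⟩ <;>
  exact (lt_or_ge (x d + 1) (x a)).imp id fun _ => by linarith

theorem unitIntervalOrder_sub_const (x : α → ℝ) (c : ℝ) :
    unitIntervalOrder (fun i => x i - c) = unitIntervalOrder x := by
  funext i j
  simp only [unitIntervalOrder, sub_add_eq_add_sub, sub_lt_sub_iff_right]

def TraceGE (r : α → α → Prop) (i j : α) : Prop :=
  ∀ k, (r j k → r i k) ∧ (r k i → r k j)

theorem TraceGE.refl (r : α → α → Prop) (i : α) : TraceGE r i i :=
  fun _ => ⟨id, id⟩

theorem TraceGE.trans {r : α → α → Prop} {i j k : α} (hij : TraceGE r i j)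
    (hjk : TraceGE r j k) : TraceGE r i k :=
  fun l => ⟨fun h => (hij l).1 ((hjk l).1 h), fun h => (hjk l).2 ((hij l).2 h)⟩

/-- Trace monotonicity is the extra invariant that lets a trace-maximal element be added:
it separates the values below the new one from those above. -/
def IsStrictRepOn (r : α → α → Prop) (x : α → ℝ) (s : Finset α) : Prop :=
  ∀ i ∈ s, ∀ j ∈ s,
    (r i j → x j + 1 < x i) ∧ (¬r i j → x i < x j + 1) ∧ (¬TraceGE r i j → x i < x j)

namespace IsSemiorder

variable {r : α → α → Prop}

theorem traceGE_total (hr : IsSemiorder r) (i j : α) : TraceGE r i j ∨ TraceGE r j i := by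
  obtain ⟨-, -, h22, h31⟩ := hr
  refine or_iff_not_imp_left.2 fun hij => ?_
  simp only [TraceGE, not_forall, not_and_or] at hij
  obtain ⟨k, ⟨hjk, hik⟩ | ⟨hki, hkj⟩⟩ := hij
  · exact fun l => ⟨fun hil => (h22 j k i l hjk hil).resolve_right hik,
      fun hlj => (h31 l j k i hlj hjk).resolve_right hik⟩
  · exact fun l => ⟨fun hil => (h31 k i l j hki hil).resolve_left hkj,
      fun hlj => (h22 l j k i hlj hki).resolve_right hkj⟩

theorem exists_traceGE_max (hr : IsSemiorder r) {s : Finset α} (hs : s.Nonempty) :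
    ∃ a ∈ s, ∀ j ∈ s, TraceGE r a j := by
  induction hs using Finset.Nonempty.cons_induction with
  | singleton a => exact ⟨a, Finset.mem_singleton_self a, by simp [TraceGE.refl]⟩
  | cons a s ha _ ih =>
    obtain ⟨b, hb, hbmax⟩ := ih
    simp only [Finset.mem_cons, exists_eq_or_imp, forall_eq_or_imp]
    rcases hr.traceGE_total a b with hab | hba
    · exact .inl ⟨TraceGE.refl r a, fun j hj => hab.trans (hbmax j hj)⟩
    · exact .inr ⟨b, hb, hba, hbmax⟩

end IsSemiorder

namespace IsStrictRepOn

variable {r : α → α → Prop} {x : α → ℝ} {s : Finset α} {a : α}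

theorem exists_value (hx : IsStrictRepOn r x s) (hmax : ∀ j ∈ s, TraceGE r a j) :
    ∃ v, (∀ j ∈ s, x j < v) ∧ (∀ j ∈ s, r a j → x j + 1 < v) ∧
      ∀ k ∈ s, ¬r a k → v < x k + 1 := by
  classical
  obtain ⟨v, hlo, hhi⟩ := Finset.exists_between'
    (s.image x ∪ (s.filter (r a)).image (x · + 1)) ((s.filter (¬r a ·)).image (x · + 1)) (by
      simp only [Finset.forall_mem_union, Finset.forall_mem_image, Finset.mem_filter, and_imp]
      refine ⟨fun j hj k hk hak => ?_, fun j hj haj k hk hak => ?_⟩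
      · by_cases hjk : r j k
        · exact absurd ((hmax j hj k).1 hjk) hak
        · exact (hx j hj k hk).2.1 hjk
      · have hjk : ¬TraceGE r j k := fun h => hak ((h a).2 haj)
        linarith [(hx j hj k hk).2.2 hjk])
  simp only [Finset.forall_mem_union, Finset.forall_mem_image, Finset.mem_filter, and_imp]
    at hlo hhi
  exact ⟨v, hlo.1, hlo.2, hhi⟩

theorem exists_insert [DecidableEq α] (hx : IsStrictRepOn r x s) (hr : IsSemiorder r)
    (ha : a ∉ s) (hmax : ∀ j ∈ s, TraceGE r a j) :
    ∃ y, IsStrictRepOn r y (insert a s) := by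
  obtain ⟨v, hgt, hlo, hhi⟩ := hx.exists_value hmax
  have hya : update x a v a = v := update_self a v x
  have hy : ∀ j ∈ s, update x a v j = x j :=
    fun j hj => update_of_ne (ne_of_mem_of_not_mem hj ha) v x
  refine ⟨update x a v, fun i hi j hj => ?_⟩
  rw [Finset.mem_insert] at hi hj
  rcases hi with rfl | hi <;> rcases hj with rfl | hj
  · exact ⟨fun h => (hr.1 _ h).elim, fun _ => lt_add_one _,
      fun h => (h (TraceGE.refl r _)).elim⟩
  · rw [hya, hy j hj]
    exact ⟨hlo j hj, hhi j hj, fun h => (h (hmax j hj)).elim⟩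
  · rw [hya, hy i hi]
    exact ⟨fun h => (hr.1 i ((hmax i hi i).2 h)).elim, fun _ => by linarith [hgt i hi],
      fun _ => hgt i hi⟩
  · rw [hy i hi, hy j hj]
    exact hx i hi j hj

end IsStrictRepOn

namespace IsSemiorder

variable {r : α → α → Prop}

theorem exists_isStrictRepOn (hr : IsSemiorder r) (s : Finset α) :
    ∃ x, IsStrictRepOn r x s := by
  classical
  induction s using Finset.strongInduction with
  | H s ih =>
    obtain rfl | hs := s.eq_empty_or_nonempty
    · exact ⟨0, by simp [IsStrictRepOn]⟩
    obtain ⟨a, ha, hmax⟩ := hr.exists_traceGE_max hs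
    obtain ⟨x, hx⟩ := ih _ (Finset.erase_ssubset ha)
    rw [← Finset.insert_erase ha]
    exact hx.exists_insert hr (Finset.notMem_erase a s)
      fun j hj => hmax j (Finset.mem_of_mem_erase hj)

theorem exists_unitIntervalOrder_eq [Finite α] (hr : IsSemiorder r) :
    ∃ x : α → ℝ, unitIntervalOrder x = r ∧ ∀ i j, x i ≠ x j + 1 := by
  have := Fintype.ofFinite α
  obtain ⟨x, hx⟩ := hr.exists_isStrictRepOn Finset.univ
  simp only [IsStrictRepOn, Finset.mem_univ, forall_const] at hx
  refine ⟨x, funext₂ fun i j => propext ⟨fun h => ?_, (hx i j).1⟩, fun i j => ?_⟩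
  · by_contra hn
    exact lt_asymm h ((hx i j).2.1 hn)
  · by_cases h : r i j
    · exact ((hx i j).1 h).ne'
    · exact ((hx i j).2.1 h).ne

end IsSemiorder

theorem IsPreconnected.lt_iff_lt_of_forall_ne {X β : Type*} [TopologicalSpace X]
    [LinearOrder β] [TopologicalSpace β] [OrderClosedTopology β] {s : Set X}
    (hs : IsPreconnected s) {f : X → β} (hf : ContinuousOn f s) {c : β}
    (hc : ∀ z ∈ s, f z ≠ c) {x y : X} (hx : x ∈ s) (hy : y ∈ s) :
    c < f x ↔ c < f y := by
  suffices key : ∀ x ∈ s, ∀ y ∈ s, c < f x → c < f y from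
    ⟨key x hx y hy, key y hy x hx⟩
  intro x hx y hy hcx
  by_contra! hyc
  obtain ⟨z, hz, hzc⟩ := hs.intermediate_value hy hx hf ⟨hyc, hcx.le⟩
  exact hc z hz hzc

theorem ne_of_mem_segment {p q c z : ℝ} (hz : z ∈ segment ℝ p q) (hp : p ≠ c) (hq : q ≠ c)
    (hpq : c < p ↔ c < q) : z ≠ c := by
  rw [segment_eq_uIcc] at hz
  rcases hp.lt_or_gt with h | h
  · have h' : q < c := lt_of_le_of_ne (not_lt.1 (hpq.not.1 h.not_gt)) hq
    exact (ordConnected_Iio.uIcc_subset h h' hz).ne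
  · exact (ordConnected_Ioi.uIcc_subset h (hpq.1 h) hz).ne'

def chamberOrder (b : Set (α → ℝ)) (i j : α) : Prop :=
  ∃ x ∈ b, x i > x j + 1

variable {m : ℕ}

theorem mem_semiorderComplement_iff {x : Fin m → ℝ} :
    x ∈ semiorderComplement m ↔ ∑ i, x i = 0 ∧ ∀ i j, x i ≠ x j + 1 := by
  refine and_congr_right fun _ => ⟨fun h i j => ?_, fun h i j _ => h i j⟩
  rcases eq_or_ne i j with rfl | hij
  · exact (lt_add_one _).ne
  · exact h i j hij

theorem chamberOrder_connectedComponentIn {x : Fin m → ℝ} (hx : x ∈ semiorderComplement m) :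
    chamberOrder (connectedComponentIn (semiorderComplement m) x) = unitIntervalOrder x := by
  funext i j
  refine propext ⟨fun ⟨y, hy, hyij⟩ => ?_, fun h => ⟨x, mem_connectedComponentIn hx, h⟩⟩
  have hne : ∀ z ∈ connectedComponentIn (semiorderComplement m) x, z i - z j ≠ 1 :=
    fun z hz => sub_eq_iff_eq_add'.not.2
      ((mem_semiorderComplement_iff.1 (connectedComponentIn_subset _ _ hz)).2 i j)
  have key := isPreconnected_connectedComponentIn.lt_iff_lt_of_forall_ne
    (f := fun z => z i - z j) (continuous_apply i |>.sub (continuous_apply j)).continuousOn hne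
    (mem_connectedComponentIn hx) hy
  rw [lt_sub_iff_add_lt', lt_sub_iff_add_lt'] at key
  exact key.2 hyij

theorem segment_subset_semiorderComplement {x y : Fin m → ℝ} (hx : x ∈ semiorderComplement m)
    (hy : y ∈ semiorderComplement m) (hxy : unitIntervalOrder x = unitIntervalOrder y) :
    segment ℝ x y ⊆ semiorderComplement m := by
  rw [mem_semiorderComplement_iff] at hx hy
  rintro _ ⟨a, b, ha, hb, hab, rfl⟩
  refine mem_semiorderComplement_iff.2
    ⟨by simp [Finset.sum_add_distrib, ← Finset.mul_sum, hx.1, hy.1], fun i j => ?_⟩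
  have hmem :
      (a • x + b • y) i - (a • x + b • y) j ∈ segment ℝ (x i - x j) (y i - y j) :=
    ⟨a, b, ha, hb, hab, by simp only [Pi.add_apply, Pi.smul_apply, smul_eq_mul]; ring⟩
  refine sub_eq_iff_eq_add'.not.1 (ne_of_mem_segment hmem ?_ ?_ ?_)
  · exact sub_eq_iff_eq_add'.not.2 (hx.2 i j)
  · exact sub_eq_iff_eq_add'.not.2 (hy.2 i j)
  · rw [lt_sub_iff_add_lt', lt_sub_iff_add_lt']
    exact iff_of_eq (congrFun₂ hxy i j)

theorem IsSemiorder.exists_mem_semiorderComplement {r : Fin m → Fin m → Prop}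
    (hr : IsSemiorder r) : ∃ x ∈ semiorderComplement m, unitIntervalOrder x = r := by
  obtain ⟨x, rfl, hx⟩ := hr.exists_unitIntervalOrder_eq
  set c := (∑ i, x i) / m
  refine ⟨fun i => x i - c, mem_semiorderComplement_iff.2 ⟨?_, fun i j h => hx i j ?_⟩,
    unitIntervalOrder_sub_const x c⟩
  · rw [Finset.sum_sub_distrib, Finset.sum_const, Finset.card_univ, Fintype.card_fin,
      nsmul_eq_mul]
    obtain rfl | hm := eq_or_ne m 0
    · simp
    · rw [mul_div_cancel₀ _ (Nat.cast_ne_zero.2 hm), sub_self]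
  · linarith

/-- The map sending a chamber `b` of the semiorder arrangement to the relation
`i ≻ j ⟺ xᵢ > xⱼ + 1` (for any `x ∈ b`) is a bijection onto the set of semiorders on
`{1, …, m}`. -/
theorem semiorder_chamber_bijection (m : ℕ) :
    Set.BijOn (fun b : Set (Fin m → ℝ) => fun i j : Fin m => ∃ x ∈ b, x i > x j + 1)
      (chambersOf (semiorderComplement m))
      {r : Fin m → Fin m → Prop | IsSemiorder r} := by
  change Set.BijOn chamberOrder _ _
  refine ⟨?_, ?_, ?_⟩
  · rintro _ ⟨x, hx, rfl⟩
    rw [mem_ofPred_eq, chamberOrder_connectedComponentIn hx]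
    exact isSemiorder_unitIntervalOrder x
  · rintro _ ⟨x, hx, rfl⟩ _ ⟨y, hy, rfl⟩ hxy
    rw [chamberOrder_connectedComponentIn hx, chamberOrder_connectedComponentIn hy] at hxy
    have hsub := (convex_segment x y).isPreconnected.subset_connectedComponentIn
      (left_mem_segment ℝ x y) (segment_subset_semiorderComplement hx hy hxy)
    exact connectedComponentIn_eq (hsub (right_mem_segment ℝ x y))
  · intro r hr
    obtain ⟨x, hx, rfl⟩ := hr.exists_mem_semiorderComplement
    exact ⟨_, ⟨x, hx, rfl⟩, chamberOrder_connectedComponentIn hx⟩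
end
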